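/- arXiv:1812.10465 — 6 statements merged into one kernel-verified Lean document; each statement's English description precedes it below -/
import Mathlib

section
/- For all integers n ≥ 5 and k ≥ 5, the number of Gallai k-colorings of K_n that use at least three distinct colors is at least k(k−1)(k−2)·(2^{C(n−2,2)} − 1), where C(a,2) = a(a−1)/2. -/
/-- The edge set of the complete graph `K_n` on the labeled vertex set `Fin n`:
unordered pairs of distinct vertices. -/
abbrev Edge (n : ℕ) := {e : Sym2 (Fin n) // ¬ e.IsDiag}

/-- The edge joining two distinct vertices. -/
def edgeOf {n : ℕ} (a b : Fin n) (h : a ≠ b) : Edge n :=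
  ⟨s(a, b), fun hd => h (Sym2.mk_isDiag_iff.mp hd)⟩

/-- A Gallai coloring: an edge coloring of `K_n` with no rainbow triangle, i.e. no
triangle whose three edges receive pairwise distinct colors. -/
def IsGallai {n k : ℕ} (φ : Edge n → Fin k) : Prop :=
  ∀ a b c : Fin n, ∀ (hab : a ≠ b) (hbc : b ≠ c) (hac : a ≠ c),
    φ (edgeOf a b hab) = φ (edgeOf b c hbc) ∨
    φ (edgeOf b c hbc) = φ (edgeOf a c hac) ∨
    φ (edgeOf a b hab) = φ (edgeOf a c hac)

/-- `c(n,k)`: the number of Gallai `k`-colorings of `K_n` (colorings as functions on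
the edge set, with colors in a set of `k` colors, not all of which need be used). -/
noncomputable def gallaiCount (n k : ℕ) : ℕ :=
  Nat.card {φ : Edge n → Fin k // IsGallai φ}

/-- `φ'` is an extension of `φ` to `K_{n+1}`, where the new vertex is `Fin.last n` and
the old vertices are embedded via `Fin.castSucc`. -/
def Extends {n k : ℕ} (φ : Edge n → Fin k) (φ' : Edge (n + 1) → Fin k) : Prop :=
  ∀ a b : Fin n, ∀ h : a ≠ b,
    φ' (edgeOf a.castSucc b.castSucc (fun he => h (Fin.castSucc_injective n he))) =
      φ (edgeOf a b h)

/-- `w(φ,k)`: the number of ways to color the `n` edges joining a new vertex to the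
vertices of `K_n` with colors from the `k` colors so that the resulting coloring of
`K_{n+1}` is Gallai; equivalently, the number of Gallai colorings of `K_{n+1}`
extending `φ`. -/
noncomputable def extCount {n k : ℕ} (φ : Edge n → Fin k) : ℕ :=
  Nat.card {φ' : Edge (n + 1) → Fin k // IsGallai φ' ∧ Extends φ φ'}

/-- Membership in `F(n,k)`: there exist a color `c` and a partition of the vertex set
into parts, each part assigned a distinct color from `[k] \ {c}` (the parts are the
fibers of `p`), such that every edge joining two different parts has color `c` and
every edge inside the part assigned color `i` has color `i` or color `c`. -/
def InF {n k : ℕ} (φ : Edge n → Fin k) : Prop :=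
  ∃ c : Fin k, ∃ p : Fin n → Fin k, (∀ v, p v ≠ c) ∧
    ∀ a b : Fin n, ∀ h : a ≠ b,
      (p a ≠ p b → φ (edgeOf a b h) = c) ∧
      (p a = p b → φ (edgeOf a b h) = p a ∨ φ (edgeOf a b h) = c)

/-- The restriction of `φ` to the edges inside the vertex set `S` belongs to
`F(|S|, k)`. -/
def InFOn {n k : ℕ} (φ : Edge n → Fin k) (S : Finset (Fin n)) : Prop :=
  ∃ c : Fin k, ∃ p : {v : Fin n // v ∈ S} → Fin k, (∀ v, p v ≠ c) ∧
    ∀ a b : {v : Fin n // v ∈ S}, ∀ h : (a : Fin n) ≠ (b : Fin n),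
      (p a ≠ p b → φ (edgeOf a b h) = c) ∧
      (p a = p b → φ (edgeOf a b h) = p a ∨ φ (edgeOf a b h) = c)


-- Auxiliary constructions for the lower bound.
section Aux

variable {n k : ℕ}

def lowerV (n : ℕ) (hn : 5 ≤ n) (v : Fin n) : Fin (n - 2) :=
  ⟨v.val - 2, by have := v.isLt; omega⟩

def raiseV (n : ℕ) (hn : 5 ≤ n) (v : Fin (n - 2)) : Fin n :=
  ⟨v.val + 2, by have := v.isLt; omega⟩

def gext {m : ℕ} (g : Edge m → Bool) : Sym2 (Fin m) → Bool :=
  fun s => if h : s.IsDiag then false else g ⟨s, h⟩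

def fcol (hn : 5 ≤ n) (c1 c2 c3 : Fin k) (g : Edge (n - 2) → Bool) (a b : Fin n) : Fin k :=
  if a.val < 2 ∧ b.val < 2 then c2
  else if a.val < 2 ∨ b.val < 2 then c3
  else if gext g s(lowerV n hn a, lowerV n hn b) then c1 else c2

lemma fcol_symm (hn : 5 ≤ n) (c1 c2 c3 : Fin k) (g : Edge (n - 2) → Bool) (a b : Fin n) :
    fcol hn c1 c2 c3 g a b = fcol hn c1 c2 c3 g b a := by
  unfold fcol
  rw [Sym2.eq_swap]
  split_ifs <;> first | rfl | tauto

def Φ (hn : 5 ≤ n) (c1 c2 c3 : Fin k) (g : Edge (n - 2) → Bool) : Edge n → Fin k :=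
  fun e => Sym2.lift ⟨fcol hn c1 c2 c3 g, fcol_symm hn c1 c2 c3 g⟩ e.val

variable (hn : 5 ≤ n) (c1 c2 c3 : Fin k) (g : Edge (n - 2) → Bool)

lemma Φ_edge (a b : Fin n) (h : a ≠ b) :
    Φ hn c1 c2 c3 g (edgeOf a b h) = fcol hn c1 c2 c3 g a b := by
  simp [Φ, edgeOf]

lemma Φ_small {a b : Fin n} (h : a ≠ b) (ha : a.val < 2) (hb : b.val < 2) :
    Φ hn c1 c2 c3 g (edgeOf a b h) = c2 := by
  rw [Φ_edge]; unfold fcol; rw [if_pos ⟨ha, hb⟩]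

lemma Φ_mixed {a b : Fin n} (h : a ≠ b)
    (hm : (a.val < 2 ∧ ¬ b.val < 2) ∨ (¬ a.val < 2 ∧ b.val < 2)) :
    Φ hn c1 c2 c3 g (edgeOf a b h) = c3 := by
  rw [Φ_edge]; unfold fcol; rw [if_neg (by tauto), if_pos (by tauto)]

lemma lower_ne {a b : Fin n} (h : a ≠ b) (ha : ¬ a.val < 2) (hb : ¬ b.val < 2) :
    lowerV n hn a ≠ lowerV n hn b := by
  intro he
  apply h
  have : (lowerV n hn a).val = (lowerV n hn b).val := congrArg Fin.val he
  simp only [lowerV] at this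
  exact Fin.ext (by omega)

lemma Φ_big {a b : Fin n} (h : a ≠ b) (ha : ¬ a.val < 2) (hb : ¬ b.val < 2)
    (hne : lowerV n hn a ≠ lowerV n hn b) :
    Φ hn c1 c2 c3 g (edgeOf a b h) =
      if g (edgeOf (lowerV n hn a) (lowerV n hn b) hne) then c1 else c2 := by
  rw [Φ_edge]; unfold fcol
  rw [if_neg (by tauto), if_neg (by tauto)]
  have hd : ¬ (s(lowerV n hn a, lowerV n hn b)).IsDiag := by
    rw [Sym2.mk_isDiag_iff]; exact hne
  have : gext g s(lowerV n hn a, lowerV n hn b)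
      = g (edgeOf (lowerV n hn a) (lowerV n hn b) hne) := by
    unfold gext
    rw [dif_neg hd]
    rfl
  rw [this]

lemma sym2_exists_eq {α : Type*} (z : Sym2 α) : ∃ x y, z = s(x, y) := by
  induction z using Sym2.ind with
  | _ x y => exact ⟨x, y, rfl⟩

lemma Φ_gallai : IsGallai (Φ hn c1 c2 c3 g) := by
  intro a b c hab hbc hac
  by_cases pa : a.val < 2 <;> by_cases pb : b.val < 2 <;> by_cases pc : c.val < 2
  · exfalso
    have h1 := Fin.val_ne_of_ne hab
    have h2 := Fin.val_ne_of_ne hbc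
    have h3 := Fin.val_ne_of_ne hac
    omega
  · right; left
    rw [Φ_mixed hn c1 c2 c3 g hbc (Or.inl ⟨pb, pc⟩), Φ_mixed hn c1 c2 c3 g hac (Or.inl ⟨pa, pc⟩)]
  · left
    rw [Φ_mixed hn c1 c2 c3 g hab (Or.inl ⟨pa, pb⟩), Φ_mixed hn c1 c2 c3 g hbc (Or.inr ⟨pb, pc⟩)]
  · right; right
    rw [Φ_mixed hn c1 c2 c3 g hab (Or.inl ⟨pa, pb⟩), Φ_mixed hn c1 c2 c3 g hac (Or.inl ⟨pa, pc⟩)]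
  · right; right
    rw [Φ_mixed hn c1 c2 c3 g hab (Or.inr ⟨pa, pb⟩), Φ_mixed hn c1 c2 c3 g hac (Or.inr ⟨pa, pc⟩)]
  · left
    rw [Φ_mixed hn c1 c2 c3 g hab (Or.inr ⟨pa, pb⟩), Φ_mixed hn c1 c2 c3 g hbc (Or.inl ⟨pb, pc⟩)]
  · right; left
    rw [Φ_mixed hn c1 c2 c3 g hbc (Or.inr ⟨pb, pc⟩), Φ_mixed hn c1 c2 c3 g hac (Or.inr ⟨pa, pc⟩)]
  · rw [Φ_big hn c1 c2 c3 g hab pa pb (lower_ne hn hab pa pb),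
        Φ_big hn c1 c2 c3 g hbc pb pc (lower_ne hn hbc pb pc),
        Φ_big hn c1 c2 c3 g hac pa pc (lower_ne hn hac pa pc)]
    split_ifs <;> tauto

lemma raise_lower (x : Fin (n - 2)) : lowerV n hn (raiseV n hn x) = x :=
  Fin.ext (by simp [lowerV, raiseV])

lemma raise_ne {x y : Fin (n - 2)} (h : x ≠ y) : raiseV n hn x ≠ raiseV n hn y := by
  intro he
  apply h
  have : (raiseV n hn x).val = (raiseV n hn y).val := congrArg Fin.val he
  simp only [raiseV] at this
  exact Fin.ext (by omega)

lemma raise_not_small (x : Fin (n - 2)) : ¬ (raiseV n hn x).val < 2 := by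
  simp [raiseV]

lemma Φ_raise {x y : Fin (n - 2)} (h : x ≠ y) :
    Φ hn c1 c2 c3 g (edgeOf (raiseV n hn x) (raiseV n hn y) (raise_ne hn h)) =
      if g (edgeOf x y h) then c1 else c2 := by
  rw [Φ_big hn c1 c2 c3 g (raise_ne hn h) (raise_not_small hn x) (raise_not_small hn y)
      (by rw [raise_lower, raise_lower]; exact h)]
  have he : edgeOf (lowerV n hn (raiseV n hn x)) (lowerV n hn (raiseV n hn y))
      (by rw [raise_lower, raise_lower]; exact h) = edgeOf x y h := by
    apply Subtype.ext
    show s(_, _) = s(_, _)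
    rw [raise_lower, raise_lower]
  rw [he]

end Aux

set_option maxHeartbeats 1000000 in
/-- For `n, k ≥ 5`, the number of Gallai `k`-colorings of `K_n` using at least three
distinct colors is at least `k(k−1)(k−2)·(2^{C(n−2,2)} − 1)`. -/
theorem three_colors_lower_bound (n k : ℕ) (hn : 5 ≤ n) (hk : 5 ≤ k) :
    k * (k - 1) * (k - 2) * (2 ^ ((n - 2) * (n - 3) / 2) - 1) ≤
      Nat.card {φ : Edge n → Fin k // IsGallai φ ∧ 3 ≤ (Set.range φ).ncard} := by
  classical
  -- vertices 0, 1, 2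
  have h0 : (0 : ℕ) < n := by omega
  have h1 : (1 : ℕ) < n := by omega
  have h2 : (2 : ℕ) < n := by omega
  set v0 : Fin n := ⟨0, h0⟩
  set v1 : Fin n := ⟨1, h1⟩
  set v2 : Fin n := ⟨2, h2⟩
  have h01 : v0 ≠ v1 := by simp [v0, v1, Fin.ext_iff]
  have h02 : v0 ≠ v2 := by simp [v0, v2, Fin.ext_iff]
  -- nontrivial g gives an edge colored true
  have exists_true : ∀ (g : Edge (n - 2) → Bool), g ≠ (fun _ => false) →
      ∃ x y : Fin (n - 2), ∃ h : x ≠ y, g (edgeOf x y h) = true := by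
    intro g hg
    have : ∃ e, g e = true := by
      by_contra hc
      push_neg at hc
      exact hg (funext fun e => by simpa using hc e)
    obtain ⟨e0, he0⟩ := this
    obtain ⟨x, y, hxy⟩ := sym2_exists_eq e0.1
    have hne : x ≠ y := by
      intro h; apply e0.2; rw [hxy]; exact Sym2.mk_isDiag_iff.mpr h
    refine ⟨x, y, hne, ?_⟩
    have : e0 = edgeOf x y hne := Subtype.ext hxy
    rw [← this]; exact he0
  -- the injection
  set F : (Fin 3 ↪ Fin k) × {g : Edge (n - 2) → Bool // g ≠ fun _ => false} →
      {φ : Edge n → Fin k // IsGallai φ ∧ 3 ≤ (Set.range φ).ncard} :=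
    fun p => ⟨Φ hn (p.1 0) (p.1 1) (p.1 2) p.2.1, Φ_gallai hn _ _ _ _, by
      obtain ⟨t, g⟩ := p
      have ht01 : t 0 ≠ t 1 := t.injective.ne (by decide)
      have ht02 : t 0 ≠ t 2 := t.injective.ne (by decide)
      have ht12 : t 1 ≠ t 2 := t.injective.ne (by decide)
      have hc2 : t 1 ∈ Set.range (Φ hn (t 0) (t 1) (t 2) g.1) :=
        ⟨edgeOf v0 v1 h01, Φ_small hn _ _ _ _ h01 (by simp [v0]) (by simp [v1])⟩
      have hc3 : t 2 ∈ Set.range (Φ hn (t 0) (t 1) (t 2) g.1) :=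
        ⟨edgeOf v0 v2 h02, Φ_mixed hn _ _ _ _ h02 (Or.inl ⟨by simp [v0], by simp [v2]⟩)⟩
      have hc1 : t 0 ∈ Set.range (Φ hn (t 0) (t 1) (t 2) g.1) := by
        obtain ⟨x, y, hne, hgt⟩ := exists_true g.1 g.2
        refine ⟨edgeOf (raiseV n hn x) (raiseV n hn y) (raise_ne hn hne), ?_⟩
        rw [Φ_raise hn _ _ _ _ hne, hgt]
        simp
      have hsub : ({t 0, t 1, t 2} : Set (Fin k)) ⊆ Set.range (Φ hn (t 0) (t 1) (t 2) g.1) := by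
        intro x hx
        rcases hx with h | h | h <;> subst h
        · exact hc1
        · exact hc2
        · exact hc3
      calc (3 : ℕ) = ({t 0, t 1, t 2} : Set (Fin k)).ncard := by
            rw [Set.ncard_insert_of_notMem (by simp [ht01, ht02]) (Set.toFinite _),
              Set.ncard_pair ht12]
        _ ≤ _ := Set.ncard_le_ncard hsub (Set.toFinite _)⟩
  have hF : Function.Injective F := by
    rintro ⟨t, g, hg⟩ ⟨t', g', hg'⟩ hEq
    have hφ : Φ hn (t 0) (t 1) (t 2) g = Φ hn (t' 0) (t' 1) (t' 2) g' :=
      congrArg Subtype.val hEq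
    have ht01 : t 0 ≠ t 1 := t.injective.ne (by decide)
    -- t 1 = t' 1
    have e1 : t 1 = t' 1 := by
      have := congrFun hφ (edgeOf v0 v1 h01)
      rwa [Φ_small hn _ _ _ _ h01 (by simp [v0]) (by simp [v1]),
        Φ_small hn _ _ _ _ h01 (by simp [v0]) (by simp [v1])] at this
    have e2 : t 2 = t' 2 := by
      have := congrFun hφ (edgeOf v0 v2 h02)
      rwa [Φ_mixed hn _ _ _ _ h02 (Or.inl ⟨by simp [v0], by simp [v2]⟩),
        Φ_mixed hn _ _ _ _ h02 (Or.inl ⟨by simp [v0], by simp [v2]⟩)] at this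
    have e0 : t 0 = t' 0 := by
      obtain ⟨x, y, hne, hgt⟩ := exists_true g hg
      have := congrFun hφ (edgeOf (raiseV n hn x) (raiseV n hn y) (raise_ne hn hne))
      rw [Φ_raise hn _ _ _ _ hne, Φ_raise hn _ _ _ _ hne, if_pos hgt] at this
      by_cases hg'e : g' (edgeOf x y hne)
      · rwa [if_pos hg'e] at this
      · rw [if_neg hg'e] at this
        exact absurd (this.trans e1.symm) ht01
    have htt : t = t' := by
      refine Function.Embedding.ext fun i => ?_
      rcases i with ⟨(_ | _ | _ | iv), hiv⟩
      · exact e0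
      · exact e1
      · exact e2
      · omega
    have hgg : g = g' := by
      funext e
      obtain ⟨x, y, hxy⟩ := sym2_exists_eq e.1
      have hne : x ≠ y := by
        intro h; apply e.2; rw [hxy]; exact Sym2.mk_isDiag_iff.mpr h
      have he : e = edgeOf x y hne := Subtype.ext hxy
      rw [he]
      have := congrFun hφ (edgeOf (raiseV n hn x) (raiseV n hn y) (raise_ne hn hne))
      rw [Φ_raise hn _ _ _ _ hne, Φ_raise hn _ _ _ _ hne] at this
      cases hb : g (edgeOf x y hne) <;> cases hb' : g' (edgeOf x y hne)
      · rfl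
      · rw [hb, hb'] at this
        simp at this
        exact absurd (e0.trans this.symm) ht01
      · rw [hb, hb'] at this
        simp at this
        exact absurd (this.trans e1.symm) ht01
      · rfl
    exact Prod.ext htt (Subtype.ext hgg)
  have hcard := Nat.card_le_card_of_injective F hF
  refine le_trans (le_of_eq ?_) hcard
  rw [Nat.card_prod, Nat.card_eq_fintype_card, Nat.card_eq_fintype_card]
  have hM : Fintype.card (Edge (n - 2)) = (n - 2) * (n - 3) / 2 := by
    rw [Sym2.card_subtype_not_diag, Fintype.card_fin, Nat.choose_two_right]
    have h : n - 2 - 1 = n - 3 := by omega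
    rw [h]
  have hG : Fintype.card {g : Edge (n - 2) → Bool // g ≠ fun _ => false}
      = 2 ^ ((n - 2) * (n - 3) / 2) - 1 := by
    have : Fintype.card {g : Edge (n - 2) → Bool // g = fun _ => false} = 1 :=
      Fintype.card_subtype_eq _
    rw [Fintype.card_subtype_compl, this, Fintype.card_fun, Fintype.card_bool, hM]
  rw [hG, Fintype.card_embedding_eq, Fintype.card_fin, Fintype.card_fin]
  have : Nat.descFactorial k 3 = k * (k - 1) * (k - 2) := by
    simp [Nat.descFactorial]
    ring
  rw [this]
end

section
/- For all integers n ≥ 5 and k ≥ 2^{2n}, the number of Gallai k-colorings of K_n that use at least three distinct colors is at least the number of Gallai k-colorings of K_n that use at most two distinct colors. -/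
lemma edge_repr {n : ℕ} (e : Edge n) : ∃ u v, ∃ h : u ≠ v, e = edgeOf u v h := by
  obtain ⟨s, hs⟩ := e
  induction s using Sym2.ind with
  | _ u v => exact ⟨u, v, fun h => hs (by simp [h]), rfl⟩

lemma edgeOf_symm {n : ℕ} (u v : Fin n) (h : u ≠ v) : edgeOf u v h = edgeOf v u h.symm := by
  apply Subtype.ext
  simp [edgeOf, Sym2.eq_swap]

def F {m k : ℕ} (a b c : Fin k) (ψ : Edge m → Bool) (x y : Fin (m+1)) : Fin k :=
  if hx : x = Fin.last m then c
  else if hy : y = Fin.last m then c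
  else if hxy : x.castPred hx = y.castPred hy then c
  else bif ψ (edgeOf _ _ hxy) then a else b

lemma F_symm {m k : ℕ} (a b c : Fin k) (ψ : Edge m → Bool) (x y : Fin (m+1)) :
    F a b c ψ x y = F a b c ψ y x := by
  unfold F
  split_ifs with h1 h2 h3 h4 h5 h6 <;>
    first
    | rfl
    | (exfalso; first | exact h3 h2.symm | exact h6 h5.symm | omega)
    | (rw [edgeOf_symm])

def Phi {m k : ℕ} (a b c : Fin k) (ψ : Edge m → Bool) : Edge (m+1) → Fin k :=
  fun e => Sym2.lift ⟨fun x y => F a b c ψ x y, fun x y => F_symm a b c ψ x y⟩ e.1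

lemma Phi_eval {m k : ℕ} (a b c : Fin k) (ψ : Edge m → Bool) (x y : Fin (m+1)) (h : x ≠ y) :
    Phi a b c ψ (edgeOf x y h) = F a b c ψ x y := by
  simp [Phi, edgeOf]

lemma F_last_left {m k : ℕ} (a b c : Fin k) (ψ : Edge m → Bool) (y : Fin (m+1)) :
    F a b c ψ (Fin.last m) y = c := dif_pos rfl

lemma F_last_right {m k : ℕ} (a b c : Fin k) (ψ : Edge m → Bool) (x : Fin (m+1)) :
    F a b c ψ x (Fin.last m) = c := by rw [F_symm]; exact dif_pos rfl

lemma F_castSucc {m k : ℕ} (a b c : Fin k) (ψ : Edge m → Bool) (u v : Fin m) (h : u ≠ v) :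
    F a b c ψ u.castSucc v.castSucc = (bif ψ (edgeOf u v h) then a else b) := by
  unfold F
  rw [dif_neg (Fin.ne_last_of_lt (Fin.castSucc_lt_last u)),
      dif_neg (Fin.ne_last_of_lt (Fin.castSucc_lt_last v))]
  simp only [Fin.castPred_castSucc]
  exact dif_neg h

lemma Phi_gallai {m k : ℕ} (a b c : Fin k) (ψ : Edge m → Bool) : IsGallai (Phi a b c ψ) := by
  intro x y z hxy hyz hxz
  rw [Phi_eval, Phi_eval, Phi_eval]
  by_cases hx : x = Fin.last m
  · subst hx; right; right; rw [F_last_left, F_last_left]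
  by_cases hy : y = Fin.last m
  · subst hy; left; rw [F_last_right, F_last_left]
  by_cases hz : z = Fin.last m
  · subst hz; right; left; rw [F_last_right, F_last_right]
  · -- interior triangle
    have hxy' : x.castPred hx ≠ y.castPred hy := fun h => hxy (by
      simpa using congrArg Fin.castSucc h)
    have hyz' : y.castPred hy ≠ z.castPred hz := fun h => hyz (by
      simpa using congrArg Fin.castSucc h)
    have hxz' : x.castPred hx ≠ z.castPred hz := fun h => hxz (by
      simpa using congrArg Fin.castSucc h)
    unfold F
    simp only [dif_neg hx, dif_neg hy, dif_neg hz, dif_neg hxy', dif_neg hyz', dif_neg hxz']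
    cases ψ (edgeOf _ _ hxy') <;> cases ψ (edgeOf _ _ hyz') <;> cases ψ (edgeOf _ _ hxz') <;>
      simp

section Param

variable {M k : ℕ}

lemma fh01 : (0 : Fin (M+4)) ≠ 1 := by simp [Fin.ext_iff]
lemma fh02 : (0 : Fin (M+4)) ≠ 2 := by simp [Fin.ext_iff, Nat.mod_eq_of_lt (show 2 < M+4 by omega)]

def E1 (M : ℕ) : Edge (M+4) := edgeOf 0 1 fh01
def E2 (M : ℕ) : Edge (M+4) := edgeOf 0 2 fh02

lemma E1_ne_E2 : E1 M ≠ E2 M := by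
  intro h
  have h2 : s((0 : Fin (M+4)), 1) = s((0 : Fin (M+4)), 2) := congrArg Subtype.val h
  have : (1 : Fin (M+4)) = 2 := Sym2.congr_right.mp h2
  simp [Fin.ext_iff, Nat.mod_eq_of_lt (show 2 < M+4 by omega)] at this

abbrev PsiT (M : ℕ) := {e : Edge (M+4) // e ≠ E1 M ∧ e ≠ E2 M} → Bool

def psiHat (ψ : PsiT M) (e : Edge (M+4)) : Bool :=
  if h1 : e = E1 M then true else if h2 : e = E2 M then false else ψ ⟨e, h1, h2⟩

def bigMap (f : Fin 3 ↪ Fin k) (ψ : PsiT M) : Edge (M+4+1) → Fin k :=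
  Phi (f 1) (f 2) (f 0) (psiHat ψ)

lemma bigMap_gallai (f : Fin 3 ↪ Fin k) (ψ : PsiT M) : IsGallai (bigMap f ψ) :=
  Phi_gallai _ _ _ _

lemma csl {u : Fin (M+4)} : u.castSucc ≠ Fin.last (M+4) :=
  Fin.ne_last_of_lt (Fin.castSucc_lt_last u)

lemma cs_ne {u v : Fin (M+4)} (h : u ≠ v) : u.castSucc ≠ v.castSucc :=
  fun he => h (Fin.castSucc_injective _ he)

lemma bigMap_hub (f : Fin 3 ↪ Fin k) (ψ : PsiT M) :
    bigMap f ψ (edgeOf (Fin.castSucc 0) (Fin.last (M+4)) csl) = f 0 := by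
  rw [bigMap, Phi_eval, F_last_right]

lemma bigMap_e1 (f : Fin 3 ↪ Fin k) (ψ : PsiT M) :
    bigMap f ψ (edgeOf (Fin.castSucc 0) (Fin.castSucc 1) (cs_ne fh01)) = f 1 := by
  rw [bigMap, Phi_eval, F_castSucc _ _ _ _ _ _ fh01]
  have : psiHat ψ (edgeOf 0 1 fh01) = true := dif_pos rfl
  rw [this]; rfl

lemma bigMap_e2 (f : Fin 3 ↪ Fin k) (ψ : PsiT M) :
    bigMap f ψ (edgeOf (Fin.castSucc 0) (Fin.castSucc 2) (cs_ne fh02)) = f 2 := by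
  rw [bigMap, Phi_eval, F_castSucc _ _ _ _ _ _ fh02]
  have : psiHat ψ (E2 M) = false := by
    rw [psiHat, dif_neg (Ne.symm E1_ne_E2), dif_pos rfl]
  show (bif psiHat ψ (E2 M) then f 1 else f 2) = f 2
  rw [this]; rfl

lemma bigMap_inside (f : Fin 3 ↪ Fin k) (ψ : PsiT M) (u v : Fin (M+4)) (h : u ≠ v) :
    bigMap f ψ (edgeOf u.castSucc v.castSucc (cs_ne h)) =
      (bif psiHat ψ (edgeOf u v h) then f 1 else f 2) := by
  rw [bigMap, Phi_eval, F_castSucc _ _ _ _ _ _ h]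

lemma bigMap_range (f : Fin 3 ↪ Fin k) (ψ : PsiT M) :
    3 ≤ (Set.range (bigMap f ψ)).ncard := by
  have h01 : f 0 ≠ f 1 := f.injective.ne (by decide)
  have h02 : f 0 ≠ f 2 := f.injective.ne (by decide)
  have h12 : f 1 ≠ f 2 := f.injective.ne (by decide)
  have hsub : ({f 0, f 1, f 2} : Set (Fin k)) ⊆ Set.range (bigMap f ψ) := by
    rintro x (rfl | rfl | rfl)
    · exact ⟨_, bigMap_hub f ψ⟩
    · exact ⟨_, bigMap_e1 f ψ⟩
    · exact ⟨_, bigMap_e2 f ψ⟩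
  have h3 : ({f 0, f 1, f 2} : Set (Fin k)).ncard = 3 := by
    rw [Set.ncard_insert_of_notMem (by simp [h01, h02]), Set.ncard_pair h12]
  rw [← h3]
  exact Set.ncard_le_ncard hsub (Set.finite_range _)

lemma bigMap_injective :
    Function.Injective (fun p : (Fin 3 ↪ Fin k) × PsiT M => bigMap p.1 p.2) := by
  rintro ⟨f, ψ⟩ ⟨g, χ⟩ h
  simp only at h
  have h0 : f 0 = g 0 := by
    rw [← bigMap_hub f ψ, ← bigMap_hub g χ, h]
  have h1 : f 1 = g 1 := by
    rw [← bigMap_e1 f ψ, ← bigMap_e1 g χ, h]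
  have h2 : f 2 = g 2 := by
    rw [← bigMap_e2 f ψ, ← bigMap_e2 g χ, h]
  have hf : f = g := by
    apply DFunLike.ext
    intro i
    fin_cases i <;> assumption
  subst hf
  have hψ : ψ = χ := by
    funext e
    obtain ⟨u, v, huv, he⟩ := edge_repr e.1
    have heval := congrFun h (edgeOf u.castSucc v.castSucc (cs_ne huv))
    have hne1 : e.1 ≠ E1 M := e.2.1
    have hne2 : e.1 ≠ E2 M := e.2.2
    rw [bigMap_inside f ψ u v huv, bigMap_inside f χ u v huv, ← he] at heval
    simp only [psiHat, dif_neg hne1, dif_neg hne2, Subtype.coe_eta] at heval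
    have h12 : f 1 ≠ f 2 := f.injective.ne (by decide)
    cases hA : ψ e <;> cases hB : χ e <;> rw [hA, hB] at heval <;> simp_all
  rw [hψ]

end Param

section Upper

lemma eq_min_or_max {α : Type*} [LinearOrder α] (s : Finset α) (hne : s.Nonempty)
    (hc : s.card ≤ 2) {x : α} (hx : x ∈ s) : x = s.min' hne ∨ x = s.max' hne := by
  by_contra hcon
  push_neg at hcon
  obtain ⟨h1, h2⟩ := hcon
  have hlt1 : s.min' hne < x := lt_of_le_of_ne (s.min'_le x hx) (Ne.symm h1)
  have hlt2 : x < s.max' hne := lt_of_le_of_ne (s.le_max' x hx) h2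
  have hsub : ({s.min' hne, x, s.max' hne} : Finset α) ⊆ s := by
    intro y hy
    simp only [Finset.mem_insert, Finset.mem_singleton] at hy
    rcases hy with rfl | rfl | rfl
    · exact s.min'_mem hne
    · exact hx
    · exact s.max'_mem hne
  have h3 : ({s.min' hne, x, s.max' hne} : Finset α).card = 3 := by
    rw [Finset.card_insert_of_notMem (by simp [hlt1.ne, (hlt1.trans hlt2).ne]),
      Finset.card_insert_of_notMem (by simp [hlt2.ne]), Finset.card_singleton]
  have := Finset.card_le_card hsub
  omega

variable {M k : ℕ}

lemma fh01' : (0 : Fin (M+5)) ≠ 1 := by simp [Fin.ext_iff]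

noncomputable def colSet (φ : Edge (M+5) → Fin k) : Finset (Fin k) :=
  (Set.finite_range φ).toFinset

lemma mem_colSet (φ : Edge (M+5) → Fin k) (e : Edge (M+5)) : φ e ∈ colSet φ := by
  rw [colSet, Set.Finite.mem_toFinset]
  exact Set.mem_range_self _

lemma colSet_nonempty (φ : Edge (M+5) → Fin k) : (colSet φ).Nonempty :=
  ⟨φ (edgeOf 0 1 fh01'), mem_colSet φ _⟩

noncomputable def upMap
    (φs : {φ : Edge (M+5) → Fin k // IsGallai φ ∧ (Set.range φ).ncard ≤ 2}) :
    Fin k × Fin k × (Edge (M+5) → Bool) :=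
  ((colSet φs.1).min' (colSet_nonempty _), (colSet φs.1).max' (colSet_nonempty _),
    fun e => decide (φs.1 e = (colSet φs.1).min' (colSet_nonempty _)))

lemma colSet_card_le
    (φs : {φ : Edge (M+5) → Fin k // IsGallai φ ∧ (Set.range φ).ncard ≤ 2}) :
    (colSet φs.1).card ≤ 2 := by
  have := φs.2.2
  rwa [Set.ncard_eq_toFinset_card (Set.range φs.1) (Set.finite_range _)] at this

lemma upMap_injective : Function.Injective (upMap (M := M) (k := k)) := by
  intro φ1 φ2 h
  have h1 : (colSet φ1.1).min' (colSet_nonempty _) = (colSet φ2.1).min' (colSet_nonempty _) :=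
    congrArg Prod.fst h
  have h2 : (colSet φ1.1).max' (colSet_nonempty _) = (colSet φ2.1).max' (colSet_nonempty _) :=
    congrArg (fun p => p.2.1) h
  have h3 : ∀ e, decide (φ1.1 e = (colSet φ1.1).min' (colSet_nonempty _)) =
      decide (φ2.1 e = (colSet φ2.1).min' (colSet_nonempty _)) :=
    fun e => congrFun (congrArg (fun p => p.2.2) h) e
  apply Subtype.ext
  funext e
  have k1 := eq_min_or_max _ (colSet_nonempty φ1.1) (colSet_card_le φ1) (mem_colSet φ1.1 e)
  have k2 := eq_min_or_max _ (colSet_nonempty φ2.1) (colSet_card_le φ2) (mem_colSet φ2.1 e)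
  by_cases hm : φ1.1 e = (colSet φ1.1).min' (colSet_nonempty _)
  · have := h3 e
    rw [decide_eq_true hm] at this
    have := of_decide_eq_true this.symm
    rw [hm, this, h1]
  · have := h3 e
    rw [decide_eq_false hm] at this
    have hm2 : φ2.1 e ≠ (colSet φ2.1).min' (colSet_nonempty _) :=
      of_decide_eq_false this.symm
    have e1 : φ1.1 e = (colSet φ1.1).max' (colSet_nonempty _) := k1.resolve_left hm
    have e2 : φ2.1 e = (colSet φ2.1).max' (colSet_nonempty _) := k2.resolve_left hm2
    rw [e1, e2, h2]

end Upper

section Count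
variable {M k : ℕ}

lemma card_upper :
    Nat.card {φ : Edge (M+5) → Fin k // IsGallai φ ∧ (Set.range φ).ncard ≤ 2} ≤
      k * k * 2 ^ ((M+5).choose 2) := by
  classical
  have h := Nat.card_le_card_of_injective _ (upMap_injective (M := M) (k := k))
  refine h.trans (le_of_eq ?_)
  rw [Nat.card_eq_fintype_card]
  rw [Fintype.card_prod, Fintype.card_prod, Fintype.card_fun, Fintype.card_bool,
    Fintype.card_fin, Sym2.card_subtype_not_diag, Fintype.card_fin]
  ring

lemma card_edge (n : ℕ) : Fintype.card (Edge n) = n.choose 2 := by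
  classical
  rw [Sym2.card_subtype_not_diag, Fintype.card_fin]

lemma card_E2sub : Fintype.card {e : Edge (M+4) // e ≠ E1 M ∧ e ≠ E2 M} =
    (M+4).choose 2 - 2 := by
  classical
  rw [Fintype.card_subtype]
  have heq : (Finset.univ.filter (fun e : Edge (M+4) => e ≠ E1 M ∧ e ≠ E2 M)) =
      Finset.univ \ {E1 M, E2 M} := by
    ext e
    simp [not_or]
  rw [heq, Finset.card_sdiff_of_subset (Finset.subset_univ _), Finset.card_univ, card_edge,
    Finset.card_insert_of_notMem (by simp [E1_ne_E2]), Finset.card_singleton]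

lemma card_lower :
    k.descFactorial 3 * 2 ^ ((M+4).choose 2 - 2) ≤
      Nat.card {φ : Edge (M+5) → Fin k // IsGallai φ ∧ 3 ≤ (Set.range φ).ncard} := by
  classical
  have hinj : Function.Injective (fun p : (Fin 3 ↪ Fin k) × PsiT M =>
      (⟨bigMap p.1 p.2, bigMap_gallai p.1 p.2, bigMap_range p.1 p.2⟩ :
        {φ : Edge (M+5) → Fin k // IsGallai φ ∧ 3 ≤ (Set.range φ).ncard})) := by
    intro p q hpq
    exact bigMap_injective (congrArg Subtype.val hpq)
  have h := Nat.card_le_card_of_injective _ hinj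
  refine le_trans (le_of_eq ?_) h
  rw [Nat.card_eq_fintype_card, Fintype.card_prod, Fintype.card_embedding_eq,
    Fintype.card_fin, Fintype.card_fin, Fintype.card_fun, Fintype.card_bool, card_E2sub]

lemma arith (hk : 2 ^ (2 * (M+5)) ≤ k) :
    k * k * 2 ^ ((M+5).choose 2) ≤ k.descFactorial 3 * 2 ^ ((M+4).choose 2 - 2) := by
  have hC : 2 ≤ (M+4).choose 2 :=
    le_trans (by decide) (Nat.choose_le_choose 2 (by omega : 4 ≤ M+4))
  have hch : (M+5).choose 2 = (M+4).choose 2 + (M+4) := by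
    rw [Nat.choose_succ_succ, Nat.choose_one_right]
    show M + 4 + (M+4).choose 2 = (M+4).choose 2 + (M+4)
    omega
  set C := (M+4).choose 2 with hCdef
  set t := (2 : ℕ) ^ (M+6) with htdef
  have ht1 : (1:ℕ) ≤ t := Nat.one_le_two_pow
  have hsplit : (M+5).choose 2 = (C - 2) + (M + 6) := by omega
  rw [hsplit, pow_add]
  have hdesc : k.descFactorial 3 = (k-2) * ((k-1) * (k * 1)) := by
    simp [Nat.descFactorial]
  have h4t : 4 * t ≤ k := by
    calc 4 * t ≤ 2^(M+4) * t := Nat.mul_le_mul_right _ (by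
          calc (4:ℕ) = 2^2 := by norm_num
          _ ≤ 2^(M+4) := Nat.pow_le_pow_right (by norm_num) (by omega))
    _ = 2^(2*(M+5)) := by rw [htdef, ← pow_add]; ring_nf
    _ ≤ k := hk
  have key : k * t ≤ (k-1) * (k-2) := by
    calc k * t ≤ (2*(k-1)) * t := Nat.mul_le_mul_right t (by omega)
    _ = (k-1) * (2*t) := by ring
    _ ≤ (k-1) * (k-2) := Nat.mul_le_mul_left _ (by omega)
  calc k * k * (2^(C-2) * t) = (k * t) * k * 2^(C-2) := by ring
  _ ≤ ((k-1)*(k-2)) * k * 2^(C-2) := by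
      exact Nat.mul_le_mul_right _ (Nat.mul_le_mul_right _ key)
  _ = (k-2) * ((k-1) * (k * 1)) * 2^(C-2) := by ring
  _ = k.descFactorial 3 * 2^(C-2) := by rw [hdesc]

end Count

/-- For `n ≥ 5` and `k ≥ 2^{2n}`, Gallai `k`-colorings of `K_n` using at least three
distinct colors outnumber those using at most two distinct colors. -/
theorem three_colors_dominate (n k : ℕ) (hn : 5 ≤ n) (hk : 2 ^ (2 * n) ≤ k) :
    Nat.card {φ : Edge n → Fin k // IsGallai φ ∧ (Set.range φ).ncard ≤ 2} ≤
      Nat.card {φ : Edge n → Fin k // IsGallai φ ∧ 3 ≤ (Set.range φ).ncard} := by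
  obtain ⟨M, rfl⟩ : ∃ M, n = M + 5 := ⟨n - 5, by omega⟩
  exact le_trans card_upper (le_trans (arith hk) card_lower)
end

section
/- Let k and n be positive integers, let φ be a Gallai coloring of K_n with colors in [k], and let φ' be a Gallai coloring of K_{n+1} with colors in [k] that extends φ (i.e., φ' agrees with φ on the edges of K_n). Then w(φ',k) ≤ 2·w(φ,k) + (k−2). -/
namespace GallaiAux

variable {n k : ℕ}

lemma edgeOf_comm {m : ℕ} (a b : Fin m) (h : a ≠ b) :
    edgeOf a b h = edgeOf b a h.symm := Subtype.ext Sym2.eq_swap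

lemma edgeOf_congr {m : ℕ} {a b a' b' : Fin m} (ha : a = a') (hb : b = b') (h : a ≠ b) :
    edgeOf a b h = edgeOf a' b' (ha ▸ hb ▸ h) := by subst ha; subst hb; rfl

/-- The condition on the colors `g a` of edges from a new vertex that makes the
extension of `φ` by `g` Gallai. -/
def Good {m : ℕ} (φ : Edge m → Fin k) (g : Fin m → Fin k) : Prop :=
  ∀ a b : Fin m, ∀ h : a ≠ b,
    g a = g b ∨ g b = φ (edgeOf a b h) ∨ g a = φ (edgeOf a b h)

def down (hn : 0 < n) (v : Fin (n + 1)) : Fin n :=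
  if h : v = Fin.last n then ⟨0, hn⟩ else v.castPred h

lemma down_castSucc (hn : 0 < n) (a : Fin n) : down hn a.castSucc = a := by
  unfold down
  rw [dif_neg (Fin.castSucc_lt_last a).ne]
  exact Fin.castPred_castSucc _

lemma castSucc_down (hn : 0 < n) {v : Fin (n + 1)} (hv : v ≠ Fin.last n) :
    (down hn v).castSucc = v := by
  unfold down
  rw [dif_neg hv]
  exact Fin.castSucc_castPred v hv

lemma down_inj (hn : 0 < n) {u v : Fin (n + 1)} (hu : u ≠ Fin.last n)
    (hv : v ≠ Fin.last n) (h : u ≠ v) : down hn u ≠ down hn v := by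
  intro he
  apply h
  rw [← castSucc_down hn hu, ← castSucc_down hn hv, he]

def fAux (hn : 0 < n) (φ : Edge n → Fin k) (g : Fin n → Fin k) (u v : Fin (n + 1)) : Fin k :=
  if u = Fin.last n then g (down hn v)
  else if v = Fin.last n then g (down hn u)
  else if h : down hn u ≠ down hn v then φ (edgeOf (down hn u) (down hn v) h)
  else g (down hn u)

lemma fAux_comm (hn : 0 < n) (φ : Edge n → Fin k) (g : Fin n → Fin k) (u v : Fin (n + 1)) :
    fAux hn φ g u v = fAux hn φ g v u := by
  unfold fAux
  by_cases hu : u = Fin.last n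
  · by_cases hv : v = Fin.last n
    · rw [if_pos hu, if_pos hv, hu, hv]
    · rw [if_pos hu, if_neg hv, if_pos hu]
  · by_cases hv : v = Fin.last n
    · rw [if_neg hu, if_pos hv, if_pos hv]
    · rw [if_neg hu, if_neg hv, if_neg hv, if_neg hu]
      by_cases h : down hn u = down hn v
      · rw [dif_neg (not_not_intro h), dif_neg (not_not_intro h.symm), h]
      · rw [dif_pos h, dif_pos (Ne.symm h)]
        exact congrArg φ (edgeOf_comm _ _ h)

noncomputable def extend (hn : 0 < n) (φ : Edge n → Fin k) (g : Fin n → Fin k) :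
    Edge (n + 1) → Fin k :=
  fun e => Sym2.lift ⟨fun u v => fAux hn φ g u v, fun u v => fAux_comm hn φ g u v⟩ e.1

lemma extend_mk (hn : 0 < n) (φ : Edge n → Fin k) (g : Fin n → Fin k)
    (u v : Fin (n + 1)) (h : u ≠ v) :
    extend hn φ g (edgeOf u v h) = fAux hn φ g u v := rfl

lemma extend_mid (hn : 0 < n) (φ : Edge n → Fin k) (g : Fin n → Fin k)
    {u v : Fin (n + 1)} (hu : u ≠ Fin.last n) (hv : v ≠ Fin.last n) (h : u ≠ v) :
    extend hn φ g (edgeOf u v h)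
      = φ (edgeOf (down hn u) (down hn v) (down_inj hn hu hv h)) := by
  rw [extend_mk]
  unfold fAux
  rw [if_neg hu, if_neg hv, dif_pos (down_inj hn hu hv h)]

lemma extend_last (hn : 0 < n) (φ : Edge n → Fin k) (g : Fin n → Fin k)
    {u : Fin (n + 1)} (hu : u ≠ Fin.last n) :
    extend hn φ g (edgeOf u (Fin.last n) hu) = g (down hn u) := by
  rw [extend_mk]
  unfold fAux
  rw [if_neg hu, if_pos rfl]

lemma extend_gallai (hn : 0 < n) {φ : Edge n → Fin k} {g : Fin n → Fin k}
    (hφ : IsGallai φ) (hg : Good φ g) : IsGallai (extend hn φ g) := by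
  intro a b c hab hbc hac
  by_cases ha : a = Fin.last n
  · subst ha
    have hb : b ≠ Fin.last n := Ne.symm hab
    have hc : c ≠ Fin.last n := Ne.symm hac
    have e1 : extend hn φ g (edgeOf (Fin.last n) b hab) = g (down hn b) := by
      rw [edgeOf_comm]; exact extend_last hn φ g hb
    have e2 : extend hn φ g (edgeOf b c hbc)
        = φ (edgeOf (down hn b) (down hn c) (down_inj hn hb hc hbc)) :=
      extend_mid hn φ g hb hc hbc
    have e3 : extend hn φ g (edgeOf (Fin.last n) c hac) = g (down hn c) := by
      rw [edgeOf_comm]; exact extend_last hn φ g hc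
    rw [e1, e2, e3]
    rcases hg (down hn b) (down hn c) (down_inj hn hb hc hbc) with h | h | h
    · exact Or.inr (Or.inr h)
    · exact Or.inr (Or.inl h.symm)
    · exact Or.inl h
  · by_cases hb : b = Fin.last n
    · subst hb
      have hc : c ≠ Fin.last n := Ne.symm hbc
      have e1 : extend hn φ g (edgeOf a (Fin.last n) hab) = g (down hn a) :=
        extend_last hn φ g ha
      have e2 : extend hn φ g (edgeOf (Fin.last n) c hbc) = g (down hn c) := by
        rw [edgeOf_comm]; exact extend_last hn φ g hc
      have e3 : extend hn φ g (edgeOf a c hac)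
          = φ (edgeOf (down hn a) (down hn c) (down_inj hn ha hc hac)) :=
        extend_mid hn φ g ha hc hac
      rw [e1, e2, e3]
      exact hg (down hn a) (down hn c) (down_inj hn ha hc hac)
    · by_cases hc : c = Fin.last n
      · subst hc
        have e1 : extend hn φ g (edgeOf a b hab)
            = φ (edgeOf (down hn a) (down hn b) (down_inj hn ha hb hab)) :=
          extend_mid hn φ g ha hb hab
        have e2 : extend hn φ g (edgeOf b (Fin.last n) hbc) = g (down hn b) :=
          extend_last hn φ g hb
        have e3 : extend hn φ g (edgeOf a (Fin.last n) hac) = g (down hn a) :=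
          extend_last hn φ g ha
        rw [e1, e2, e3]
        rcases hg (down hn a) (down hn b) (down_inj hn ha hb hab) with h | h | h
        · exact Or.inr (Or.inl h.symm)
        · exact Or.inl h.symm
        · exact Or.inr (Or.inr h.symm)
      · rw [extend_mid hn φ g ha hb, extend_mid hn φ g hb hc, extend_mid hn φ g ha hc]
        exact hφ _ _ _ _ _ _

lemma extend_extends (hn : 0 < n) (φ : Edge n → Fin k) (g : Fin n → Fin k) :
    Extends φ (extend hn φ g) := by
  intro a b h
  rw [extend_mid hn φ g (Fin.castSucc_lt_last a).ne (Fin.castSucc_lt_last b).ne]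
  exact congrArg φ (Subtype.ext
    (by rw [show (edgeOf (down hn a.castSucc) (down hn b.castSucc) _).1
            = s(down hn a.castSucc, down hn b.castSucc) from rfl,
          down_castSucc, down_castSucc]; rfl))

lemma extend_new (hn : 0 < n) (φ : Edge n → Fin k) (g : Fin n → Fin k) (a : Fin n) :
    extend hn φ g (edgeOf a.castSucc (Fin.last n) (Fin.castSucc_lt_last a).ne) = g a := by
  rw [extend_last hn φ g (Fin.castSucc_lt_last a).ne, down_castSucc]

lemma W_le_extCount (hn : 0 < n) {φ : Edge n → Fin k} (hφ : IsGallai φ) :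
    Nat.card {g : Fin n → Fin k // Good φ g} ≤ extCount φ := by
  apply Nat.card_le_card_of_injective
    (f := fun g => (⟨extend hn φ g.1, extend_gallai hn hφ g.2, extend_extends hn φ g.1⟩ :
      {φ' : Edge (n + 1) → Fin k // IsGallai φ' ∧ Extends φ φ'}))
  intro g1 g2 he
  apply Subtype.ext
  funext a
  have h1 := congrArg (fun ψ : {φ' : Edge (n + 1) → Fin k // IsGallai φ' ∧ Extends φ φ'} =>
    ψ.1 (edgeOf a.castSucc (Fin.last n) (Fin.castSucc_lt_last a).ne)) he
  simpa only [extend_new] using h1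

lemma edge_cases {m : ℕ} (e : Edge (m + 1)) :
    (∃ (a b : Fin m) (h : a ≠ b), e = edgeOf a.castSucc b.castSucc
      (fun he => h (Fin.castSucc_injective m he))) ∨
    (∃ a : Fin m, e = edgeOf a.castSucc (Fin.last m) (Fin.castSucc_lt_last a).ne) := by
  obtain ⟨z, hz⟩ := e
  revert hz
  induction z using Sym2.ind with
  | _ u v =>
    intro hz
    have huv : u ≠ v := fun h => hz (Sym2.mk_isDiag_iff.mpr h)
    by_cases hu : u = Fin.last m
    · subst hu
      have hv : v ≠ Fin.last m := Ne.symm huv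
      right
      exact ⟨v.castPred hv, Subtype.ext (by
        rw [show (edgeOf ((v.castPred hv).castSucc) (Fin.last m) _).1
            = s((v.castPred hv).castSucc, Fin.last m) from rfl, Fin.castSucc_castPred]
        exact Sym2.eq_swap)⟩
    · by_cases hv : v = Fin.last m
      · subst hv
        right
        exact ⟨u.castPred hu, Subtype.ext (by
          rw [show (edgeOf ((u.castPred hu).castSucc) (Fin.last m) _).1
              = s((u.castPred hu).castSucc, Fin.last m) from rfl, Fin.castSucc_castPred])⟩
      · left
        refine ⟨u.castPred hu, v.castPred hv, fun h => huv (by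
          rw [← Fin.castSucc_castPred u hu, ← Fin.castSucc_castPred v hv, h]), Subtype.ext (by
          rw [show (edgeOf ((u.castPred hu).castSucc) ((v.castPred hv).castSucc) _).1
              = s((u.castPred hu).castSucc, (v.castPred hv).castSucc) from rfl,
            Fin.castSucc_castPred, Fin.castSucc_castPred])⟩

lemma extCount_le_W {m : ℕ} {φ' : Edge (m + 1) → Fin k} :
    extCount φ' ≤ Nat.card {g : Fin (m + 1) → Fin k // Good φ' g} := by
  apply Nat.card_le_card_of_injective
    (f := fun ψ : {ψ : Edge (m + 2) → Fin k // IsGallai ψ ∧ Extends φ' ψ} =>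
      (⟨fun a => ψ.1 (edgeOf a.castSucc (Fin.last (m + 1)) (Fin.castSucc_lt_last a).ne), by
        intro a b h
        have h3 := ψ.2.1 a.castSucc b.castSucc (Fin.last (m + 1))
          (fun he => h (Fin.castSucc_injective _ he))
          (Fin.castSucc_lt_last b).ne (Fin.castSucc_lt_last a).ne
        rw [ψ.2.2 a b h] at h3
        rcases h3 with h3 | h3 | h3
        · exact Or.inr (Or.inl h3.symm)
        · exact Or.inl h3.symm
        · exact Or.inr (Or.inr h3.symm)⟩ :
        {g : Fin (m + 1) → Fin k // Good φ' g}))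
  intro ψ1 ψ2 he
  have hg : ∀ a : Fin (m + 1),
      ψ1.1 (edgeOf a.castSucc (Fin.last (m + 1)) (Fin.castSucc_lt_last a).ne)
      = ψ2.1 (edgeOf a.castSucc (Fin.last (m + 1)) (Fin.castSucc_lt_last a).ne) :=
    fun a => congrFun (congrArg Subtype.val he) a
  apply Subtype.ext
  funext e
  rcases edge_cases e with ⟨a, b, h, rfl⟩ | ⟨a, rfl⟩
  · rw [ψ1.2.2 a b h, ψ2.2.2 a b h]
  · exact hg a

open Classical in
lemma W_step (hk : 0 < k) (φ : Edge n → Fin k) (φ' : Edge (n + 1) → Fin k)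
    (hext : Extends φ φ') :
    Nat.card {g : Fin (n + 1) → Fin k // Good φ' g}
      ≤ 2 * Nat.card {g : Fin n → Fin k // Good φ g} + (k - 2) := by
  classical
  set η₀ : Fin n → Fin k :=
    fun a => φ' (edgeOf a.castSucc (Fin.last n) (Fin.castSucc_lt_last a).ne) with hη₀
  set S : Finset (Fin n → Fin k) := Finset.univ.filter (Good φ) with hS
  have hWφ : Nat.card {g : Fin n → Fin k // Good φ g} = S.card := by
    rw [Nat.card_eq_fintype_card, Fintype.card_subtype]
  set T : Finset ((Fin n → Fin k) × Fin k) :=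
    Finset.univ.filter (fun p => Good φ' (Fin.snoc p.1 p.2)) with hT
  have snoc_eq : ∀ g : Fin (n + 1) → Fin k,
      Fin.snoc (fun a : Fin n => g a.castSucc) (g (Fin.last n)) = g := by
    intro g
    funext i
    cases i using Fin.lastCases with
    | last => rw [Fin.snoc_last]
    | cast i => rw [Fin.snoc_castSucc]
  have hWφ' : Nat.card {g : Fin (n + 1) → Fin k // Good φ' g} = T.card := by
    have e : {g : Fin (n + 1) → Fin k // Good φ' g}
        ≃ {p : (Fin n → Fin k) × Fin k // Good φ' (Fin.snoc p.1 p.2)} :=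
      { toFun := fun g => ⟨((fun a => g.1 a.castSucc), g.1 (Fin.last n)), by
          rw [snoc_eq g.1]; exact g.2⟩
        invFun := fun p => ⟨Fin.snoc p.1.1 p.1.2, p.2⟩
        left_inv := fun g => Subtype.ext (snoc_eq g.1)
        right_inv := fun p => Subtype.ext (by
          ext <;> simp [Fin.snoc_castSucc, Fin.snoc_last])
      }
    rw [Nat.card_congr e, Nat.card_eq_fintype_card, Fintype.card_subtype]
  rw [hWφ, hWφ']
  -- restriction of a good coloring is good
  have good_restrict : ∀ (η : Fin n → Fin k) (x : Fin k),
      Good φ' (Fin.snoc η x) → Good φ η := by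
    intro η x hg a b h
    have h3 := hg a.castSucc b.castSucc (fun he => h (Fin.castSucc_injective n he))
    rw [hext a b h] at h3
    simpa only [Fin.snoc_castSucc] using h3
  have fiber_mem : ∀ p ∈ T, p.1 ∈ S := by
    intro p hp
    rw [hT, Finset.mem_filter] at hp
    rw [hS, Finset.mem_filter]
    exact ⟨Finset.mem_univ _, good_restrict p.1 p.2 hp.2⟩
  set F : (Fin n → Fin k) → ℕ :=
    fun η => (T.filter fun p => p.1 = η).card with hF
  have hTcard : T.card = ∑ η ∈ S, F η :=
    Finset.card_eq_sum_card_fiberwise fiber_mem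
  -- fibers over η ≠ η₀ have at most two elements
  have fiber_le_two : ∀ η : Fin n → Fin k, η ≠ η₀ → F η ≤ 2 := by
    intro η hne
    obtain ⟨a₀, ha₀⟩ := Function.ne_iff.mp hne
    have hsub : (T.filter fun p => p.1 = η) ⊆ {η} ×ˢ {η a₀, η₀ a₀} := by
      intro p hp
      rw [Finset.mem_filter, hT, Finset.mem_filter] at hp
      obtain ⟨⟨-, hgood⟩, h1⟩ := hp
      rw [Finset.mem_product, Finset.mem_singleton, Finset.mem_insert, Finset.mem_singleton]
      refine ⟨h1, ?_⟩
      have h3 := hgood a₀.castSucc (Fin.last n) (Fin.castSucc_lt_last a₀).ne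
      rw [Fin.snoc_castSucc, Fin.snoc_last, h1] at h3
      have h4 : φ' (edgeOf a₀.castSucc (Fin.last n) (Fin.castSucc_lt_last a₀).ne)
          = η₀ a₀ := rfl
      rw [h4] at h3
      rcases h3 with h3 | h3 | h3
      · exact Or.inl h3.symm
      · exact Or.inr h3
      · exact absurd h3 ha₀
    calc F η ≤ ({η} ×ˢ ({η a₀, η₀ a₀} : Finset (Fin k))).card := Finset.card_le_card hsub
      _ = 1 * ({η a₀, η₀ a₀} : Finset (Fin k)).card := by
          rw [Finset.card_product, Finset.card_singleton]
      _ ≤ 1 * 2 := by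
          exact Nat.mul_le_mul_left 1 (Finset.card_insert_le _ _ |>.trans (by simp))
      _ = 2 := by norm_num
  have fiber_le_k : F η₀ ≤ k := by
    have hsub : (T.filter fun p => p.1 = η₀) ⊆ {η₀} ×ˢ Finset.univ := by
      intro p hp
      rw [Finset.mem_filter] at hp
      rw [Finset.mem_product, Finset.mem_singleton]
      exact ⟨hp.2, Finset.mem_univ _⟩
    calc F η₀ ≤ ({η₀} ×ˢ (Finset.univ : Finset (Fin k))).card := Finset.card_le_card hsub
      _ = 1 * k := by rw [Finset.card_product, Finset.card_singleton, Finset.card_univ,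
          Fintype.card_fin]
      _ = k := one_mul k
  rw [hTcard]
  by_cases hmem : η₀ ∈ S
  · have hsplit : ∑ η ∈ S, F η = F η₀ + ∑ η ∈ S.erase η₀, F η :=
      (Finset.add_sum_erase S F hmem).symm
    have hbound : ∑ η ∈ S.erase η₀, F η ≤ (S.erase η₀).card * 2 := by
      have := Finset.sum_le_card_nsmul (S.erase η₀) F 2
        (fun x hx => fiber_le_two x (Finset.ne_of_mem_erase hx))
      simpa [smul_eq_mul] using this
    have hcard : (S.erase η₀).card = S.card - 1 := Finset.card_erase_of_mem hmem
    have hS1 : 1 ≤ S.card := Finset.card_pos.mpr ⟨η₀, hmem⟩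
    rw [hsplit]
    have := fiber_le_k
    omega
  · have hbound : ∑ η ∈ S, F η ≤ S.card * 2 := by
      have := Finset.sum_le_card_nsmul S F 2
        (fun x hx => fiber_le_two x (fun h => hmem (h ▸ hx)))
      simpa [smul_eq_mul] using this
    omega

end GallaiAux


/-- If `φ'` is a Gallai extension of the Gallai coloring `φ`, then
`w(φ',k) ≤ 2·w(φ,k) + (k−2)`. -/
theorem extension_count_growth (n k : ℕ) (hn : 0 < n) (hk : 0 < k)
    (φ : Edge n → Fin k) (φ' : Edge (n + 1) → Fin k)
    (hφ : IsGallai φ) (hφ' : IsGallai φ') (hext : Extends φ φ') :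
    extCount φ' ≤ 2 * extCount φ + (k - 2) := by
  calc extCount φ' ≤ Nat.card {g : Fin (n + 1) → Fin k // GallaiAux.Good φ' g} :=
        GallaiAux.extCount_le_W
    _ ≤ 2 * Nat.card {g : Fin n → Fin k // GallaiAux.Good φ g} + (k - 2) :=
        GallaiAux.W_step hk φ φ' hext
    _ ≤ 2 * extCount φ + (k - 2) := by
        have := GallaiAux.W_le_extCount hn hφ
        omega
end

section
/- For all integers n ≥ 2 and k ≥ 2, c(n,k) ≤ (k−1)^n · 2^{C(n,2)}, where C(n,2) = n(n−1)/2. -/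
namespace GallaiAux

variable {n k : ℕ}

lemma cs_ne {a b : Fin n} (h : a ≠ b) : a.castSucc ≠ b.castSucc :=
  fun he => h (Fin.castSucc_injective n he)

lemma ne_last (a : Fin n) : a.castSucc ≠ Fin.last n :=
  Fin.ne_of_lt (Fin.castSucc_lt_last a)

def emb (e : Edge n) : Edge (n + 1) :=
  ⟨e.1.map Fin.castSucc, fun hd =>
    e.2 ((Sym2.isDiag_map (Fin.castSucc_injective n)).mp hd)⟩

lemma emb_edgeOf (a b : Fin n) (h : a ≠ b) :
    emb (edgeOf a b h) = edgeOf a.castSucc b.castSucc (cs_ne h) :=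
  Subtype.ext (by simp [edgeOf, emb, Sym2.map_pair_eq])

def restrict (φ : Edge (n + 1) → Fin k) : Edge n → Fin k := fun e => φ (emb e)

def star (φ : Edge (n + 1) → Fin k) : Fin n → Fin k :=
  fun a => φ (edgeOf a.castSucc (Fin.last n) (ne_last a))

def Valid (φ : Edge n → Fin k) (x : Fin n → Fin k) : Prop :=
  ∀ a b : Fin n, ∀ h : a ≠ b,
    x a = x b ∨ φ (edgeOf a b h) = x a ∨ φ (edgeOf a b h) = x b

lemma restrict_isGallai {φ : Edge (n + 1) → Fin k} (hφ : IsGallai φ) :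
    IsGallai (restrict φ) := by
  intro a b c hab hbc hac
  have := hφ a.castSucc b.castSucc c.castSucc (cs_ne hab) (cs_ne hbc) (cs_ne hac)
  simpa [restrict, emb_edgeOf] using this

lemma star_valid {φ : Edge (n + 1) → Fin k} (hφ : IsGallai φ) :
    Valid (restrict φ) (star φ) := by
  intro a b h
  have := hφ a.castSucc b.castSucc (Fin.last n) (cs_ne h) (ne_last b) (ne_last a)
  simp only [restrict, emb_edgeOf, star]
  rcases this with h1 | h1 | h1
  · exact Or.inr (Or.inr h1)
  · exact Or.inl h1.symm
  · exact Or.inr (Or.inl h1)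

lemma valid_restrict {φ : Edge (n + 1) → Fin k} {x : Fin (n + 1) → Fin k}
    (hx : Valid φ x) : Valid (restrict φ) (x ∘ Fin.castSucc) := by
  intro a b h
  have := hx a.castSucc b.castSucc (cs_ne h)
  simpa [restrict, emb_edgeOf] using this

lemma valid_last {φ : Edge (n + 1) → Fin k} {x : Fin (n + 1) → Fin k}
    (hx : Valid φ x) (a : Fin n) :
    x a.castSucc = x (Fin.last n) ∨ star φ a = x a.castSucc ∨
      star φ a = x (Fin.last n) :=
  hx a.castSucc (Fin.last n) (ne_last a)

/-- Encoding helper for the special branch. -/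
def code {α : Type*} (c0 c1 : Fin k) (y : α) (v : Fin k) :
    (α × Bool) ⊕ {v : Fin k // v ≠ c0 ∧ v ≠ c1} :=
  if h0 : v = c0 then Sum.inl (y, false)
  else if h1 : v = c1 then Sum.inl (y, true)
  else Sum.inr ⟨v, h0, h1⟩

lemma code_inj {α : Type*} {c0 c1 : Fin k} (hc : c0 ≠ c1) {y y' : α} {v v' : Fin k}
    (h : code c0 c1 y v = code c0 c1 y' v') : v = v' := by
  unfold code at h
  by_cases h0 : v = c0 <;> by_cases h1 : v = c1 <;>
    by_cases h0' : v' = c0 <;> by_cases h1' : v' = c1 <;>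
      simp_all

lemma code_eq_inl {α : Type*} {c0 c1 : Fin k} {y p : α} {v : Fin k} {b : Bool}
    (h : code c0 c1 y v = Sum.inl (p, b)) : y = p := by
  unfold code at h
  by_cases h0 : v = c0 <;> by_cases h1 : v = c1 <;> simp_all

/-- The key counting lemma for star extensions. -/
lemma card_valid_le (hk : 2 ≤ k) :
    ∀ (n : ℕ) (φ : Edge n → Fin k),
      Nat.card {x : Fin n → Fin k // Valid φ x} + (k - 2) ≤ (k - 1) * 2 ^ n := by
  intro n
  induction n with
  | zero =>
    intro φ
    have hu : Nat.card {x : Fin 0 → Fin k // Valid φ x} = 1 := by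
      haveI : Unique {x : Fin 0 → Fin k // Valid φ x} :=
        { default := ⟨fun a => a.elim0, fun a => a.elim0⟩
          uniq := fun x => Subtype.ext (funext fun a => a.elim0) }
      exact Nat.card_unique
    rw [hu]
    omega
  | succ n ih =>
    intro φ
    classical
    set R := restrict φ with hR
    set st := star φ with hst
    set c0 : Fin k := ⟨0, by omega⟩ with hc0
    set c1 : Fin k := ⟨1, by omega⟩ with hc1
    have hc01 : c0 ≠ c1 := by simp [hc0, hc1, Fin.ext_iff]
    have hA : ∀ y : Fin n → Fin k, y ≠ st →
        (Finset.univ.filter (fun a => y a ≠ st a)).Nonempty := by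
      intro y hy
      by_contra hne
      rw [Finset.not_nonempty_iff_eq_empty, Finset.filter_eq_empty_iff] at hne
      exact hy (funext fun a => not_not.mp (hne (Finset.mem_univ a)))
    set T := ({y : Fin n → Fin k // Valid R y} × Bool) ⊕
      {v : Fin k // v ≠ c0 ∧ v ≠ c1} with hT
    have hxmem : ∀ (x : {x : Fin (n+1) → Fin k // Valid φ x})
        (hsp : x.1 ∘ Fin.castSucc ≠ st),
        x.1 (Fin.last n) = (x.1 ∘ Fin.castSucc)
            ((Finset.univ.filter (fun a => (x.1 ∘ Fin.castSucc) a ≠ st a)).min'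
              (hA _ hsp)) ∨
        x.1 (Fin.last n) = st
            ((Finset.univ.filter (fun a => (x.1 ∘ Fin.castSucc) a ≠ st a)).min'
              (hA _ hsp)) := by
      intro x hsp
      set a0 := (Finset.univ.filter (fun a => (x.1 ∘ Fin.castSucc) a ≠ st a)).min'
        (hA _ hsp) with ha0
      have hmem := Finset.min'_mem _ (hA _ hsp)
      rw [← ha0, Finset.mem_filter] at hmem
      rcases valid_last x.2 a0 with h | h | h
      · exact Or.inl h.symm
      · exact absurd h.symm hmem.2
      · exact Or.inr h.symm
    set Ψ : {x : Fin (n+1) → Fin k // Valid φ x} → T := fun x =>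
      if hsp : x.1 ∘ Fin.castSucc = st then
        code c0 c1 (⟨x.1 ∘ Fin.castSucc, valid_restrict x.2⟩ :
          {y : Fin n → Fin k // Valid R y}) (x.1 (Fin.last n))
      else
        Sum.inl (⟨x.1 ∘ Fin.castSucc, valid_restrict x.2⟩,
          decide (x.1 (Fin.last n) = st
            ((Finset.univ.filter (fun a => (x.1 ∘ Fin.castSucc) a ≠ st a)).min'
              (hA _ hsp)))) with hΨ
    have hinj : Function.Injective Ψ := by
      intro x x' h
      have key : x.1 ∘ Fin.castSucc = x'.1 ∘ Fin.castSucc ∧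
          x.1 (Fin.last n) = x'.1 (Fin.last n) := by
        by_cases hsp : x.1 ∘ Fin.castSucc = st <;>
          by_cases hsp' : x'.1 ∘ Fin.castSucc = st <;>
            simp only [hΨ, hsp, hsp', dif_pos, dif_neg, not_false_iff] at h
        · -- both special
          exact ⟨hsp.trans hsp'.symm, code_inj hc01 h⟩
        · -- special vs nonspecial
          exact absurd (congrArg Subtype.val (code_eq_inl h)).symm hsp'
        · exact absurd (congrArg Subtype.val (code_eq_inl h.symm)).symm hsp
        · -- both nonspecial
          have h' := Sum.inl.inj h
          have hy : x.1 ∘ Fin.castSucc = x'.1 ∘ Fin.castSucc :=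
            congrArg (fun z => z.1.1) h'
          have hb := congrArg Prod.snd h'
          simp only at hb
          refine ⟨hy, ?_⟩
          have ha0eq : (Finset.univ.filter (fun a => (x.1 ∘ Fin.castSucc) a ≠ st a)).min'
                (hA _ hsp) =
              (Finset.univ.filter (fun a => (x'.1 ∘ Fin.castSucc) a ≠ st a)).min'
                (hA _ hsp') := by
            congr 1
            rw [hy]
          set a0 := (Finset.univ.filter (fun a => (x.1 ∘ Fin.castSucc) a ≠ st a)).min'
            (hA _ hsp) with ha0d
          rw [← ha0eq] at hb
          rw [decide_eq_decide] at hb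
          by_cases hcase : x.1 (Fin.last n) = st a0
          · rw [hcase, hb.mp hcase]
          · have hcase' : ¬ x'.1 (Fin.last n) = st a0 := fun hc => hcase (hb.mpr hc)
            rcases hxmem x hsp with h1 | h1
            · rcases hxmem x' hsp' with h2 | h2
              · rw [h1, h2, ← ha0eq, ← ha0d]
                exact congrFun hy a0
              · rw [← ha0eq] at h2; exact absurd h2 hcase'
            · exact absurd h1 hcase
      refine Subtype.ext (funext fun v => ?_)
      induction v using Fin.lastCases with
      | last => exact key.2
      | cast a => exact congrFun key.1 a
    have hcard1 : Nat.card {x : Fin (n+1) → Fin k // Valid φ x} ≤ Nat.card T :=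
      Nat.card_le_card_of_injective Ψ hinj
    have hcardT : Nat.card T =
        2 * Nat.card {y : Fin n → Fin k // Valid R y} +
          Nat.card {v : Fin k // v ≠ c0 ∧ v ≠ c1} := by
      rw [hT, Nat.card_sum, Nat.card_prod, Nat.card_eq_fintype_card (α := Bool)]
      simp [mul_comm]
    have hm : Nat.card {v : Fin k // v ≠ c0 ∧ v ≠ c1} ≤ k - 2 := by
      rw [Nat.card_eq_fintype_card, Fintype.card_subtype]
      have hsub : Finset.univ.filter (fun v : Fin k => v ≠ c0 ∧ v ≠ c1) ⊆
          Finset.univ \ {c0, c1} := by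
        intro v hv
        rw [Finset.mem_filter] at hv
        simp [hv.2.1, hv.2.2]
      calc (Finset.univ.filter (fun v : Fin k => v ≠ c0 ∧ v ≠ c1)).card
          ≤ (Finset.univ \ {c0, c1} : Finset (Fin k)).card := Finset.card_le_card hsub
        _ = k - 2 := by
            rw [Finset.card_sdiff_of_subset (Finset.subset_univ _)]
            simp [Finset.card_pair hc01]
    have hih := ih R
    have h2 : (k - 1) * 2 ^ (n + 1) = 2 * ((k - 1) * 2 ^ n) := by ring
    omega

end GallaiAux

namespace GallaiAux2
open GallaiAux

variable {n k : ℕ}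

lemma pair_eq {ψ1 ψ2 : Edge (n + 1) → Fin k}
    (hR : restrict ψ1 = restrict ψ2) (hS : star ψ1 = star ψ2) :
    ∀ (u v : Fin (n + 1)) (huv : u ≠ v),
      ψ1 (edgeOf u v huv) = ψ2 (edgeOf u v huv) := by
  intro u v
  induction u using Fin.lastCases with
  | last =>
    induction v using Fin.lastCases with
    | last => intro huv; exact absurd rfl huv
    | cast b =>
      intro huv
      have he : edgeOf (Fin.last n) b.castSucc huv =
          edgeOf b.castSucc (Fin.last n) (ne_last b) := Subtype.ext Sym2.eq_swap
      rw [he]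
      exact congrFun hS b
  | cast a =>
    induction v using Fin.lastCases with
    | last => intro huv; exact congrFun hS a
    | cast b =>
      intro huv
      have hab : a ≠ b := fun hh => huv (by rw [hh])
      have := congrFun hR (edgeOf a b hab)
      simp only [restrict, emb_edgeOf] at this
      exact this

lemma extend_eq {ψ1 ψ2 : Edge (n + 1) → Fin k}
    (hR : restrict ψ1 = restrict ψ2) (hS : star ψ1 = star ψ2) : ψ1 = ψ2 := by
  funext e
  obtain ⟨s, hs⟩ := e
  revert hs
  induction s using Sym2.inductionOn with
  | hf u v =>
    intro hs
    have huv : u ≠ v := fun hh => hs (by rw [hh]; exact Sym2.mk_isDiag_iff.mpr rfl)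
    exact pair_eq hR hS u v huv

/-- One-vertex extension step. -/
lemma gallai_step (hk : 2 ≤ k) (n : ℕ) :
    gallaiCount (n + 1) k ≤ gallaiCount n k * ((k - 1) * 2 ^ n) := by
  classical
  set M := (k - 1) * 2 ^ n with hM
  -- per-coloring embedding of valid stars into Fin M
  have hcard : ∀ φ : {φ : Edge n → Fin k // IsGallai φ},
      Nat.card {x : Fin n → Fin k // Valid φ.1 x} ≤ M := by
    intro φ
    have := card_valid_le hk n φ.1
    omega
  let j : ∀ φ : {φ : Edge n → Fin k // IsGallai φ},
      {x : Fin n → Fin k // Valid φ.1 x} → Fin M :=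
    fun φ x => Fin.castLE (hcard φ) ((Finite.equivFin _) x)
  have hjinj : ∀ φ, Function.Injective (j φ) := by
    intro φ a b hab
    have : ((Finite.equivFin _) a : Fin _) = (Finite.equivFin _) b := by
      have := congrArg Fin.val hab
      exact Fin.ext this
    exact (Finite.equivFin _).injective this
  -- first injection: restriction + star, into the sigma type
  let down : {ψ : Edge (n + 1) → Fin k // IsGallai ψ} →
      Σ φ : {φ : Edge n → Fin k // IsGallai φ}, {x : Fin n → Fin k // Valid φ.1 x} :=
    fun ψ => ⟨⟨restrict ψ.1, restrict_isGallai ψ.2⟩, ⟨star ψ.1, star_valid ψ.2⟩⟩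
  have hdown : Function.Injective down := by
    intro ψ1 ψ2 h
    have hR : restrict ψ1.1 = restrict ψ2.1 := congrArg (fun z => z.1.1) h
    have hS : star ψ1.1 = star ψ2.1 := congrArg (fun z => z.2.1) h
    exact Subtype.ext (extend_eq hR hS)
  -- second injection: sigma into product
  let flat : (Σ φ : {φ : Edge n → Fin k // IsGallai φ},
      {x : Fin n → Fin k // Valid φ.1 x}) →
      {φ : Edge n → Fin k // IsGallai φ} × Fin M :=
    fun p => (p.1, j p.1 p.2)
  have hflat : Function.Injective flat := by
    rintro ⟨φ1, x1⟩ ⟨φ2, x2⟩ h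
    have h1 : φ1 = φ2 := congrArg Prod.fst h
    subst h1
    have h2 : j φ1 x1 = j φ1 x2 := congrArg Prod.snd h
    rw [hjinj φ1 h2]
  have hcomp : Function.Injective (flat ∘ down) := hflat.comp hdown
  have := Nat.card_le_card_of_injective _ hcomp
  calc gallaiCount (n + 1) k
      ≤ Nat.card ({φ : Edge n → Fin k // IsGallai φ} × Fin M) := this
    _ = gallaiCount n k * M := by
        rw [Nat.card_prod, Nat.card_eq_fintype_card (α := Fin M), Fintype.card_fin]
        rfl

lemma gallai_all (hk : 2 ≤ k) : ∀ n : ℕ,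
    gallaiCount n k ≤ (k - 1) ^ n * 2 ^ (n.choose 2) := by
  intro n
  induction n with
  | zero =>
    have h1 : gallaiCount 0 k ≤ 1 := by
      have : Subsingleton {φ : Edge 0 → Fin k // IsGallai φ} := by
        constructor
        intro a b
        refine Subtype.ext (funext fun e => ?_)
        exact absurd e.2 (by
          have : (e.1 : Sym2 (Fin 0)).IsDiag := by
            induction (e.1 : Sym2 (Fin 0)) using Sym2.inductionOn with
            | hf x y => exact x.elim0
          simp [this])
      exact Finite.card_le_one_iff_subsingleton.mpr this
    simpa using h1
  | succ n ih =>
    calc gallaiCount (n + 1) k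
        ≤ gallaiCount n k * ((k - 1) * 2 ^ n) := gallai_step hk n
      _ ≤ ((k - 1) ^ n * 2 ^ (n.choose 2)) * ((k - 1) * 2 ^ n) := by
          exact Nat.mul_le_mul_right _ ih
      _ = (k - 1) ^ (n + 1) * 2 ^ ((n + 1).choose 2) := by
          have hch : (n + 1).choose 2 = n.choose 2 + n := by
            rw [Nat.choose_succ_succ]
            simp [Nat.choose_one_right, Nat.add_comm]
          rw [hch, pow_succ, pow_add]
          ring

end GallaiAux2

/-- For all `n, k ≥ 2`, `c(n,k) ≤ (k−1)^n · 2^{C(n,2)}`. -/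
theorem gallai_count_upper_bound (n k : ℕ) (hn : 2 ≤ n) (hk : 2 ≤ k) :
    gallaiCount n k ≤ (k - 1) ^ n * 2 ^ (n * (n - 1) / 2) := by
  have := GallaiAux2.gallai_all hk n
  rwa [Nat.choose_two_right] at this
end

section
/- Let m and n be positive integers and let φ be an edge coloring of K_n with two colors, red and blue, such that each of the two colors appears on more than 3mn edges. Then there exist m+1 pairwise disjoint triples of vertices (r_1,u_1,b_1), …, (r_{m+1},u_{m+1},b_{m+1}) such that for every i, the edge u_i r_i is red and the edge u_i b_i is blue. -/
lemma fin_two_cases (x : Fin 2) : x = 0 ∨ x = 1 := by fin_cases x <;> simp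

lemma exists_triple {n : ℕ} (φ : Edge n → Fin 2) (A : Set (Fin n))
    (e1 e2 : Edge n) (hc1 : φ e1 = 0) (hc2 : φ e2 = 1)
    (hA1 : ∀ v, v ∈ e1.1 → v ∈ A) (hA2 : ∀ v, v ∈ e2.1 → v ∈ A) :
    ∃ r u b : Fin n, r ∈ A ∧ u ∈ A ∧ b ∈ A ∧
      ∃ (h1 : u ≠ r) (h2 : u ≠ b),
        φ (edgeOf u r h1) = 0 ∧ φ (edgeOf u b h2) = 1 := by
  obtain ⟨s1, hd1⟩ := e1
  obtain ⟨s2, hd2⟩ := e2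
  obtain ⟨a, b, rfl⟩ : ∃ x y, s1 = s(x, y) := Sym2.ind (fun x y => ⟨x, y, rfl⟩) s1
  obtain ⟨c, d, rfl⟩ : ∃ x y, s2 = s(x, y) := Sym2.ind (fun x y => ⟨x, y, rfl⟩) s2
  have hab : a ≠ b := fun h => hd1 (Sym2.mk_isDiag_iff.mpr h)
  have hcd : c ≠ d := fun h => hd2 (Sym2.mk_isDiag_iff.mpr h)
  have haA : a ∈ A := hA1 a (by simp)
  have hbA : b ∈ A := hA1 b (by simp)
  have hcA : c ∈ A := hA2 c (by simp)
  have hdA : d ∈ A := hA2 d (by simp)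
  have key1 : ∀ h : a ≠ b, φ (edgeOf a b h) = 0 := fun h => by
    have : edgeOf a b h = ⟨s(a, b), hd1⟩ := Subtype.ext rfl
    rw [this]; exact hc1
  have key2 : ∀ h : c ≠ d, φ (edgeOf c d h) = 1 := fun h => by
    have : edgeOf c d h = ⟨s(c, d), hd2⟩ := Subtype.ext rfl
    rw [this]; exact hc2
  by_cases h1 : a = c
  · subst h1
    refine ⟨b, a, d, hbA, haA, hdA, hab, hcd, key1 hab, key2 hcd⟩
  by_cases h2 : a = d
  · subst h2
    refine ⟨b, a, c, hbA, haA, hcA, hab, Ne.symm hcd, key1 hab, ?_⟩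
    have : edgeOf a c (Ne.symm hcd) = ⟨s(c, a), hd2⟩ := Subtype.ext (Sym2.eq_swap)
    rw [this]; exact hc2
  by_cases h3 : b = c
  · subst h3
    refine ⟨a, b, d, haA, hbA, hdA, Ne.symm hab, hcd, ?_, key2 hcd⟩
    have : edgeOf b a (Ne.symm hab) = ⟨s(a, b), hd1⟩ := Subtype.ext (Sym2.eq_swap)
    rw [this]; exact hc1
  by_cases h4 : b = d
  · subst h4
    refine ⟨a, b, c, haA, hbA, hcA, Ne.symm hab, Ne.symm hcd, ?_, ?_⟩
    · have : edgeOf b a (Ne.symm hab) = ⟨s(a, b), hd1⟩ := Subtype.ext (Sym2.eq_swap)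
      rw [this]; exact hc1
    · have : edgeOf b c (Ne.symm hcd) = ⟨s(c, b), hd2⟩ := Subtype.ext (Sym2.eq_swap)
      rw [this]; exact hc2
  · -- all four vertices distinct
    have hac : a ≠ c := h1
    rcases fin_two_cases (φ (edgeOf a c hac)) with h | h
    · refine ⟨a, c, d, haA, hcA, hdA, Ne.symm hac, hcd, ?_, key2 hcd⟩
      have : edgeOf c a (Ne.symm hac) = edgeOf a c hac := Subtype.ext (Sym2.eq_swap)
      rw [this]; exact h
    · exact ⟨b, a, c, hbA, haA, hcA, hab, hac, key1 hab, h⟩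

lemma exists_avoiding {n : ℕ} (φ : Edge n → Fin 2) (c : Fin 2) (T : Finset (Fin n))
    (h : T.card * n < {e : Edge n | φ e = c}.ncard) :
    ∃ e : Edge n, φ e = c ∧ ∀ v, v ∈ e.1 → v ∉ T := by
  by_contra hcon
  push_neg at hcon
  have key : ∀ e : {e : Edge n // φ e = c}, ∃ p : T × Fin n, e.1.1 = s(p.1.1, p.2) := by
    intro e
    obtain ⟨v, hv, hvT⟩ := hcon e.1 e.2
    exact ⟨(⟨v, hvT⟩, Sym2.Mem.other hv), (Sym2.other_spec hv).symm⟩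
  choose g hg using key
  have hginj : Function.Injective g := by
    intro e e' he
    apply Subtype.ext; apply Subtype.ext
    rw [hg e, hg e', he]
  have hle := Nat.card_le_card_of_injective g hginj
  have hcard : Nat.card ({x // x ∈ T} × Fin n) = T.card * n := by
    rw [Nat.card_prod, Nat.card_eq_finsetCard, Nat.card_eq_fintype_card, Fintype.card_fin]
  have hfin : {e : Edge n | φ e = c}.ncard ≤ T.card * n := by
    rw [← Nat.card_coe_set_eq]
    exact hcard ▸ hle
  omega

lemma exists_family {m n : ℕ} (φ : Edge n → Fin 2)
    (hred : 3 * m * n < {e : Edge n | φ e = 0}.ncard)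
    (hblue : 3 * m * n < {e : Edge n | φ e = 1}.ncard) :
    ∀ k, k ≤ m + 1 → ∃ f : Fin k × Fin 3 → Fin n, Function.Injective f ∧
      ∀ i : Fin k, ∃ (h1 : f (i, 1) ≠ f (i, 0)) (h2 : f (i, 1) ≠ f (i, 2)),
        φ (edgeOf (f (i, 1)) (f (i, 0)) h1) = 0 ∧
        φ (edgeOf (f (i, 1)) (f (i, 2)) h2) = 1 := by
  intro k
  induction k with
  | zero =>
    exact fun _ => ⟨fun p => p.1.elim0, fun p => p.1.elim0, fun i => i.elim0⟩
  | succ k ih =>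
    intro hk
    obtain ⟨f, hfinj, hfprop⟩ := ih (le_trans (Nat.le_succ k) hk)
    set T : Finset (Fin n) := Finset.image f Finset.univ with hTdef
    have hmemT : ∀ p, f p ∈ T := fun p => Finset.mem_image_of_mem f (Finset.mem_univ p)
    have hTcard : T.card * n ≤ 3 * m * n := by
      have h1 : T.card ≤ Fintype.card (Fin k × Fin 3) :=
        le_trans Finset.card_image_le (le_of_eq (Finset.card_univ))
      have h2 : Fintype.card (Fin k × Fin 3) = k * 3 := by simp
      have hk' : k ≤ m := by omega
      exact Nat.mul_le_mul_right n (by omega)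
    obtain ⟨e1, he1c, he1T⟩ := exists_avoiding φ 0 T (lt_of_le_of_lt hTcard hred)
    obtain ⟨e2, he2c, he2T⟩ := exists_avoiding φ 1 T (lt_of_le_of_lt hTcard hblue)
    obtain ⟨r, u, b, hrT, huT, hbT, h1, h2, hcol1, hcol2⟩ :=
      exists_triple φ {v | v ∉ T} e1 e2 he1c he2c he1T he2T
    have hrb : r ≠ b := by
      intro h
      subst h
      have heq : edgeOf u r h1 = edgeOf u r h2 := Subtype.ext rfl
      rw [heq, hcol2] at hcol1
      exact absurd hcol1 (by decide)
    set F : Fin (k + 1) → Fin 3 → Fin n := Fin.snoc (fun i c => f (i, c)) ![r, u, b]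
      with hFdef
    have hFc : ∀ (i : Fin k) (c : Fin 3), F i.castSucc c = f (i, c) := by
      intro i c; rw [hFdef, Fin.snoc_castSucc]
    have hFl : ∀ c : Fin 3, F (Fin.last k) c = ![r, u, b] c := by
      intro c; rw [hFdef, Fin.snoc_last]
    have hnewT : ∀ c : Fin 3, ![r, u, b] c ∉ T := by
      intro c; fin_cases c
      · exact hrT
      · exact huT
      · exact hbT
    refine ⟨fun p => F p.1 p.2, ?_, ?_⟩
    · rintro ⟨i, c⟩ ⟨j, d⟩ hij
      simp only at hij
      rcases Fin.eq_castSucc_or_eq_last i with ⟨i', rfl⟩ | rfl <;>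
        rcases Fin.eq_castSucc_or_eq_last j with ⟨j', rfl⟩ | rfl
      · rw [hFc, hFc] at hij
        have := hfinj hij
        rw [show i' = j' from congrArg Prod.fst this, show c = d from congrArg Prod.snd this]
      · rw [hFc, hFl] at hij
        exact absurd (hij ▸ hmemT (i', c)) (hnewT d)
      · rw [hFl, hFc] at hij
        exact absurd (hij.symm ▸ hmemT (j', d)) (hnewT c)
      · rw [hFl, hFl] at hij
        have hcd : c = d := by
          fin_cases c <;> fin_cases d <;> simp_all <;>
            first
              | rfl
              | exact absurd hij h1 | exact absurd hij h2 | exact absurd hij hrb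
              | exact absurd hij.symm h1 | exact absurd hij.symm h2
              | exact absurd hij.symm hrb
        rw [hcd]
    · intro i
      beta_reduce
      rcases Fin.eq_castSucc_or_eq_last i with ⟨i', rfl⟩ | rfl
      · obtain ⟨g1, g2, p1, p2⟩ := hfprop i'
        have e0 : F i'.castSucc 0 = f (i', 0) := hFc i' 0
        have e1' : F i'.castSucc 1 = f (i', 1) := hFc i' 1
        have e2' : F i'.castSucc 2 = f (i', 2) := hFc i' 2
        refine ⟨by rw [e1', e0]; exact g1, by rw [e1', e2']; exact g2, ?_, ?_⟩
        · have : edgeOf (F i'.castSucc 1) (F i'.castSucc 0) (by rw [e1', e0]; exact g1) =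
              edgeOf (f (i', 1)) (f (i', 0)) g1 := Subtype.ext (show s(F i'.castSucc 1, F i'.castSucc 0) = s(f (i', 1), f (i', 0)) by rw [e1', e0])
          exact (congrArg φ this).trans p1
        · have : edgeOf (F i'.castSucc 1) (F i'.castSucc 2) (by rw [e1', e2']; exact g2) =
              edgeOf (f (i', 1)) (f (i', 2)) g2 := Subtype.ext (show s(F i'.castSucc 1, F i'.castSucc 2) = s(f (i', 1), f (i', 2)) by rw [e1', e2'])
          exact (congrArg φ this).trans p2
      · have e0 : F (Fin.last k) 0 = r := hFl 0
        have e1' : F (Fin.last k) 1 = u := hFl 1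
        have e2' : F (Fin.last k) 2 = b := hFl 2
        refine ⟨by rw [e1', e0]; exact h1, by rw [e1', e2']; exact h2, ?_, ?_⟩
        · have : edgeOf (F (Fin.last k) 1) (F (Fin.last k) 0) (by rw [e1', e0]; exact h1) =
              edgeOf u r h1 := Subtype.ext (show s(F (Fin.last k) 1, F (Fin.last k) 0) = s(u, r) by rw [e1', e0])
          exact (congrArg φ this).trans hcol1
        · have : edgeOf (F (Fin.last k) 1) (F (Fin.last k) 2) (by rw [e1', e2']; exact h2) =
              edgeOf u b h2 := Subtype.ext (show s(F (Fin.last k) 1, F (Fin.last k) 2) = s(u, b) by rw [e1', e2'])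
          exact (congrArg φ this).trans hcol2


/-- In a red/blue coloring of `K_n` (red = `0`, blue = `1`) where both colors appear on
more than `3mn` edges, there are `m+1` pairwise disjoint triples `(rᵢ, uᵢ, bᵢ)` of
vertices with `uᵢrᵢ` red and `uᵢbᵢ` blue. -/
theorem disjoint_bicolored_triples (m n : ℕ) (hm : 0 < m) (hn : 0 < n)
    (φ : Edge n → Fin 2)
    (hred : 3 * m * n < {e : Edge n | φ e = 0}.ncard)
    (hblue : 3 * m * n < {e : Edge n | φ e = 1}.ncard) :
    ∃ r u b : Fin (m + 1) → Fin n,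
      Function.Injective (fun p : Fin (m + 1) × Fin 3 => ![r, u, b] p.2 p.1) ∧
      ∀ i : Fin (m + 1), ∃ (h1 : u i ≠ r i) (h2 : u i ≠ b i),
        φ (edgeOf (u i) (r i) h1) = 0 ∧ φ (edgeOf (u i) (b i) h2) = 1 := by
  obtain ⟨f, hinj, hprop⟩ := exists_family φ hred hblue (m + 1) le_rfl
  refine ⟨fun i => f (i, 0), fun i => f (i, 1), fun i => f (i, 2), ?_, fun i => hprop i⟩
  have : (fun p : Fin (m + 1) × Fin 3 =>
      ![fun i => f (i, 0), fun i => f (i, 1), fun i => f (i, 2)] p.2 p.1) = f := by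
    funext p
    obtain ⟨i, c⟩ := p
    fin_cases c <;> rfl
  rw [this]
  exact hinj
end

section
/- For all integers n ≥ 2 and k ≥ 2, f'(n,k) ≤ 2^{C(n,2) − 0.05 n² + (n+1)·log₂ k}, where C(n,2) = n(n−1)/2 and the right-hand side is the real power of 2 with the indicated exponent. -/
/-- `F'(n,k)`: members of `F(n,k)` such that no set of at least `0.9n` vertices induces
a complete subgraph whose edges use at most two distinct colors; `f'(n,k)` is their
number. -/
noncomputable def fCount' (n k : ℕ) : ℕ :=
  Nat.card {φ : Edge n → Fin k // InF φ ∧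
    ¬ ∃ S : Finset (Fin n), 0.9 * (n : ℝ) ≤ (S.card : ℝ) ∧
      {c : Fin k | ∃ a ∈ S, ∃ b ∈ S, ∃ h : a ≠ b, φ (edgeOf a b h) = c}.ncard ≤ 2}

section Aux
open Finset
variable {n k : ℕ}

def Compat (c : Fin k) (p : Fin n → Fin k) (φ : Edge n → Fin k) : Prop :=
  (∀ v, p v ≠ c) ∧
  ∀ a b : Fin n, ∀ h : a ≠ b,
    (p a ≠ p b → φ (edgeOf a b h) = c) ∧
    (p a = p b → φ (edgeOf a b h) = p a ∨ φ (edgeOf a b h) = c)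

noncomputable def ordInner (p : Fin n → Fin k) : Finset (Fin n × Fin n) := by
  classical exact Finset.univ.filter fun q => q.1 < q.2 ∧ p q.1 = p q.2

lemma edgeOf_eq {a b : Fin n} (h : a ≠ b) (hz : ¬ (s(a,b) : Sym2 (Fin n)).IsDiag) :
    (⟨s(a,b), hz⟩ : Edge n) = edgeOf a b h := rfl

lemma edgeOf_swap {a b : Fin n} (h : a ≠ b) :
    edgeOf a b h = edgeOf b a h.symm := Subtype.ext (Sym2.eq_swap)

lemma card_compat_le (c : Fin k) (p : Fin n → Fin k) (G : Finset (Edge n → Fin k))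
    (hG : ∀ φ ∈ G, Compat c p φ) :
    G.card ≤ 2 ^ (ordInner p).card := by
  classical
  have hlt : ∀ q : ↥(ordInner p), (q : Fin n × Fin n).1 < (q : Fin n × Fin n).2 := by
    intro q
    have := q.2
    simp only [ordInner, Finset.mem_filter] at this
    exact this.2.1
  have key : G.card ≤ (Finset.univ : Finset (↥(ordInner p) → Bool)).card := by
    apply Finset.card_le_card_of_injOn
      (fun φ (q : ↥(ordInner p)) =>
        decide (φ (edgeOf (q : Fin n × Fin n).1 (q : Fin n × Fin n).2 (ne_of_lt (hlt q))) = c))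
      (fun _ _ => Finset.mem_univ _)
    intro φ₁ h₁ φ₂ h₂ heq
    have hc₁ := hG φ₁ h₁
    have hc₂ := hG φ₂ h₂
    -- key pointwise fact for inner ordered pairs
    have hpt : ∀ a b : Fin n, a < b → p a = p b →
        ∀ h : a ≠ b, φ₁ (edgeOf a b h) = φ₂ (edgeOf a b h) := by
      intro a b hab hp h
      have hq : (a, b) ∈ ordInner p := by
        simp [ordInner, hab, hp]
      have := congrFun heq ⟨(a, b), hq⟩
      simp only at this
      by_cases h1 : φ₁ (edgeOf a b h) = c
      · have h2 : φ₂ (edgeOf a b h) = c := by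
          rw [h1] at this; simpa using this.symm
        rw [h1, h2]
      · have h2 : φ₂ (edgeOf a b h) ≠ c := by
          intro h2; rw [h2] at this; simp [h1] at this
        have e1 := ((hc₁.2 a b h).2 hp).resolve_right h1
        have e2 := ((hc₂.2 a b h).2 hp).resolve_right h2
        rw [e1, e2]
    funext e
    obtain ⟨z, hz⟩ := e
    induction z using Sym2.ind with
    | _ a b =>
      have hab : a ≠ b := fun h => hz (by simp [h])
      rw [edgeOf_eq hab]
      by_cases hp : p a = p b
      · rcases hab.lt_or_gt with hlt' | hlt'
        · exact hpt a b hlt' hp hab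
        · rw [edgeOf_swap hab]
          exact hpt b a hlt' hp.symm hab.symm
      · rw [(hc₁.2 a b hab).1 hp, (hc₂.2 a b hab).1 hp]
  calc G.card ≤ _ := key
    _ = 2 ^ (ordInner p).card := by
        simp [Finset.card_univ, Fintype.card_fun]
end Aux

def NoBig {n k : ℕ} (φ : Edge n → Fin k) : Prop :=
  ¬ ∃ S : Finset (Fin n), 0.9 * (n : ℝ) ≤ (S.card : ℝ) ∧
      {c : Fin k | ∃ a ∈ S, ∃ b ∈ S, ∃ h : a ≠ b, φ (edgeOf a b h) = c}.ncard ≤ 2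

section Aux2
variable {n k : ℕ}

lemma fiber_small (c : Fin k) (p : Fin n → Fin k) (φ : Edge n → Fin k)
    (hc : Compat c p φ) (hnb : NoBig φ) (i : Fin k) :
    (((Finset.univ.filter fun v => p v = i)).card : ℝ) < 0.9 * n := by
  classical
  by_contra hle
  push_neg at hle
  apply hnb
  refine ⟨Finset.univ.filter fun v => p v = i, hle, ?_⟩
  have hsub : {c' : Fin k | ∃ a ∈ (Finset.univ.filter fun v => p v = i),
      ∃ b ∈ (Finset.univ.filter fun v => p v = i), ∃ h : a ≠ b, φ (edgeOf a b h) = c'}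
      ⊆ {i, c} := by
    rintro c' ⟨a, ha, b, hb, h, rfl⟩
    simp only [Finset.mem_filter] at ha hb
    have hp : p a = p b := by rw [ha.2, hb.2]
    rcases (hc.2 a b h).2 hp with h1 | h1
    · left; rw [h1, ha.2]
    · right; exact h1
  calc ({c' : Fin k | ∃ a ∈ (Finset.univ.filter fun v => p v = i),
      ∃ b ∈ (Finset.univ.filter fun v => p v = i), ∃ h : a ≠ b, φ (edgeOf a b h) = c'}).ncard
      ≤ ({i, c} : Set (Fin k)).ncard := Set.ncard_le_ncard hsub (Set.toFinite _)
    _ ≤ 2 := by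
        calc ({i, c} : Set (Fin k)).ncard ≤ ({c} : Set (Fin k)).ncard + 1 :=
              Set.ncard_insert_le i {c}
          _ = 2 := by rw [Set.ncard_singleton]

lemma card_ordInner_le (p : Fin n → Fin k)
    (hfib : ∀ i : Fin k, (((Finset.univ.filter fun v => p v = i)).card : ℝ) < 0.9 * n) :
    (((ordInner p)).card : ℝ) ≤ 0.45 * (n : ℝ) ^ 2 - 0.5 * n := by
  classical
  set sN : Finset (Fin n × Fin n) :=
    Finset.univ.filter (fun q => q.1 ≠ q.2 ∧ p q.1 = p q.2) with hsN
  -- doubling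
  have h2 : 2 * (ordInner p).card ≤ sN.card := by
    have hdisj : Disjoint (ordInner p) ((ordInner p).image Prod.swap) := by
      rw [Finset.disjoint_left]
      intro q hq hq'
      simp only [ordInner, Finset.mem_filter, Finset.mem_univ, true_and] at hq
      rcases Finset.mem_image.mp hq' with ⟨r, hr, hrq⟩
      simp only [ordInner, Finset.mem_filter, Finset.mem_univ, true_and] at hr
      rw [← hrq] at hq
      exact absurd hq.1 (not_lt.mpr (le_of_lt hr.1))
    have hsub : (ordInner p) ∪ (ordInner p).image Prod.swap ⊆ sN := by
      intro q hq
      rcases Finset.mem_union.mp hq with hq | hq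
      · simp only [ordInner, Finset.mem_filter, Finset.mem_univ, true_and] at hq
        simp [hsN, ne_of_lt hq.1, hq.2]
      · rcases Finset.mem_image.mp hq with ⟨r, hr, hrq⟩
        simp only [ordInner, Finset.mem_filter, Finset.mem_univ, true_and] at hr
        subst hrq
        simp [hsN, (ne_of_lt hr.1).symm, hr.2.symm]
    calc 2 * (ordInner p).card
        = (ordInner p).card + ((ordInner p).image Prod.swap).card := by
          rw [Finset.card_image_of_injective _ Prod.swap_injective]; ring
      _ = ((ordInner p) ∪ (ordInner p).image Prod.swap).card :=
          (Finset.card_union_of_disjoint hdisj).symm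
      _ ≤ sN.card := Finset.card_le_card hsub
  -- bound sN.card
  have hNfib : sN.card = ∑ a : Fin n, (sN.filter fun q => q.1 = a).card := by
    exact Finset.card_eq_sum_card_fiberwise (fun q _ => Finset.mem_univ q.1)
  have hfibN : ∀ a : Fin n,
      ((sN.filter fun q => q.1 = a).card : ℝ) ≤ 0.9 * n - 1 := by
    intro a
    have hinj : (sN.filter fun q => q.1 = a).card ≤
        (((Finset.univ.filter fun v => p v = p a)).erase a).card := by
      apply Finset.card_le_card_of_injOn (fun q => q.2)
      · intro q hq
        simp only [hsN, Finset.mem_coe, Finset.mem_filter, Finset.mem_univ, true_and] at hq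
        obtain ⟨⟨hne, hp⟩, h1⟩ := hq
        simp only [Finset.mem_coe, Finset.mem_erase]
        constructor
        · rw [← h1]; exact fun h => hne (h.symm)
        · simp [← hp, h1]
      · intro q hq q' hq' h
        simp only [Finset.mem_coe, Finset.mem_filter] at hq hq'
        exact Prod.ext (hq.2.trans hq'.2.symm) h
    have hmem : a ∈ (Finset.univ.filter fun v => p v = p a) := by simp
    have hcard := Finset.card_erase_of_mem hmem
    have hpos : 1 ≤ (Finset.univ.filter fun v => p v = p a).card :=
      Finset.card_pos.mpr ⟨a, hmem⟩
    have h1 : (((Finset.univ.filter fun v => p v = p a)).erase a).card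
        = (Finset.univ.filter fun v => p v = p a).card - 1 := hcard
    have := hfib (p a)
    have hcast : ((((Finset.univ.filter fun v => p v = p a)).erase a).card : ℝ)
        = ((Finset.univ.filter fun v => p v = p a).card : ℝ) - 1 := by
      rw [h1, Nat.cast_sub hpos, Nat.cast_one]
    calc ((sN.filter fun q => q.1 = a).card : ℝ)
        ≤ ((((Finset.univ.filter fun v => p v = p a)).erase a).card : ℝ) := by
          exact_mod_cast hinj
      _ ≤ 0.9 * n - 1 := by rw [hcast]; linarith
  have hN : (sN.card : ℝ) ≤ n * (0.9 * n - 1) := by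
    rw [hNfib]
    push_cast
    calc ∑ a : Fin n, ((sN.filter fun q => q.1 = a).card : ℝ)
        ≤ ∑ _a : Fin n, (0.9 * (n : ℝ) - 1) := Finset.sum_le_sum (fun a _ => hfibN a)
      _ = n * (0.9 * n - 1) := by simp [Finset.sum_const, Finset.card_univ, mul_comm]; ring
  have h2' : 2 * ((ordInner p).card : ℝ) ≤ (sN.card : ℝ) := by exact_mod_cast h2
  nlinarith [h2', hN]

end Aux2


/-- For `n, k ≥ 2`, `f'(n,k) ≤ 2^{C(n,2) − 0.05n² + (n+1)·log₂ k}`. -/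
theorem fCount'_upper_bound (n k : ℕ) (hn : 2 ≤ n) (hk : 2 ≤ k) :
    (fCount' n k : ℝ) ≤
      (2 : ℝ) ^ ((n : ℝ) * ((n : ℝ) - 1) / 2 - 0.05 * (n : ℝ) ^ 2
        + ((n : ℝ) + 1) * Real.logb 2 k) := by
  classical
  set E : ℝ := 0.45 * (n : ℝ) ^ 2 - 0.5 * n with hE
  set G : Finset (Edge n → Fin k) :=
    Finset.univ.filter (fun φ => InF φ ∧ NoBig φ) with hG
  have hcount : fCount' n k = G.card := by
    rw [fCount', Nat.card_eq_fintype_card, Fintype.card_subtype, hG]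
    exact congrArg Finset.card (Finset.filter_congr (fun x _ => Iff.rfl))
  have hsub : G ⊆ (Finset.univ : Finset (Fin k × (Fin n → Fin k))).biUnion
      (fun cp => G.filter (fun φ => Compat cp.1 cp.2 φ)) := by
    intro φ hφ
    obtain ⟨c, p, h1, h2⟩ := (Finset.mem_filter.mp hφ).2.1
    exact Finset.mem_biUnion.mpr ⟨(c, p), Finset.mem_univ _,
      Finset.mem_filter.mpr ⟨hφ, h1, h2⟩⟩
  have hple : ∀ cp : Fin k × (Fin n → Fin k),
      (((G.filter (fun φ => Compat cp.1 cp.2 φ))).card : ℝ) ≤ (2 : ℝ) ^ E := by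
    rintro ⟨c, p⟩
    rcases Finset.eq_empty_or_nonempty (G.filter (fun φ => Compat c p φ)) with he | ⟨φ₀, hφ₀⟩
    · rw [he]
      simp only [Finset.card_empty, Nat.cast_zero]
      positivity
    · have hmem := Finset.mem_filter.mp hφ₀
      have hnb : NoBig φ₀ := (Finset.mem_filter.mp hmem.1).2.2
      have hOI := card_ordInner_le p (fun i => fiber_small c p φ₀ hmem.2 hnb i)
      have hcard := card_compat_le c p (G.filter (fun φ => Compat c p φ))
        (fun φ hφ => (Finset.mem_filter.mp hφ).2)
      calc (((G.filter (fun φ => Compat c p φ))).card : ℝ)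
          ≤ ((2 ^ (ordInner p).card : ℕ) : ℝ) := by exact_mod_cast hcard
        _ = (2 : ℝ) ^ (((ordInner p).card : ℕ) : ℝ) := by
            rw [Real.rpow_natCast]; push_cast; ring
        _ ≤ (2 : ℝ) ^ E :=
            Real.rpow_le_rpow_of_exponent_le (by norm_num) hOI
  have hsum : (G.card : ℝ) ≤ ((k : ℝ) * (k : ℝ) ^ n) * (2 : ℝ) ^ E := by
    have h1 : G.card ≤ ∑ cp : Fin k × (Fin n → Fin k),
        (G.filter (fun φ => Compat cp.1 cp.2 φ)).card :=
      le_trans (Finset.card_le_card hsub) (Finset.card_biUnion_le)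
    have h2 : ((∑ cp : Fin k × (Fin n → Fin k),
        (G.filter (fun φ => Compat cp.1 cp.2 φ)).card : ℕ) : ℝ)
        ≤ ∑ _cp : Fin k × (Fin n → Fin k), (2 : ℝ) ^ E := by
      push_cast
      exact Finset.sum_le_sum (fun cp _ => hple cp)
    have h3 : (∑ _cp : Fin k × (Fin n → Fin k), (2 : ℝ) ^ E)
        = ((k : ℝ) * (k : ℝ) ^ n) * (2 : ℝ) ^ E := by
      rw [Finset.sum_const, Finset.card_univ]
      simp [Fintype.card_prod, Fintype.card_fun, nsmul_eq_mul]
    calc (G.card : ℝ) ≤ _ := by exact_mod_cast h1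
      _ ≤ _ := h2
      _ = _ := h3
  rw [hcount]
  have hk0 : (0 : ℝ) < (k : ℝ) := by
    exact_mod_cast Nat.lt_of_lt_of_le (by norm_num) hk
  have hklog : (2 : ℝ) ^ (((n : ℝ) + 1) * Real.logb 2 k) = (k : ℝ) * (k : ℝ) ^ n := by
    rw [mul_comm ((n : ℝ) + 1), Real.rpow_mul (by norm_num : (0:ℝ) ≤ 2),
      Real.rpow_logb (by norm_num) (by norm_num) hk0,
      show ((n : ℝ) + 1) = ((n + 1 : ℕ) : ℝ) by push_cast; ring,
      Real.rpow_natCast]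
    ring
  calc (G.card : ℝ) ≤ ((k : ℝ) * (k : ℝ) ^ n) * (2 : ℝ) ^ E := hsum
    _ = (2 : ℝ) ^ (((n : ℝ) + 1) * Real.logb 2 k) * (2 : ℝ) ^ E := by rw [hklog]
    _ = (2 : ℝ) ^ (((n : ℝ) + 1) * Real.logb 2 k + E) :=
        (Real.rpow_add (by norm_num) _ _).symm
    _ = (2 : ℝ) ^ ((n : ℝ) * ((n : ℝ) - 1) / 2 - 0.05 * (n : ℝ) ^ 2
        + ((n : ℝ) + 1) * Real.logb 2 k) := by
        rw [show ((n : ℝ) + 1) * Real.logb 2 k + E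
          = (n : ℝ) * ((n : ℝ) - 1) / 2 - 0.05 * (n : ℝ) ^ 2
            + ((n : ℝ) + 1) * Real.logb 2 k from by rw [hE]; ring]
end
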